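/- arXiv:1906.09063 — 5 statements merged into one kernel-verified Lean document; each statement's English description precedes it below -/
import Mathlib

section
/- If X is an isotropic random vector in R^n (n ≥ 2) with finite fourth moments, then Λ(X) ≥ (n−1)/n. -/
open MeasureTheory ProbabilityTheory Real
open scoped RealInnerProductSpace ENNReal Pointwise

noncomputable section

/-- The uniform (normalized rotation-invariant) probability measure `σ_{n-1}`
on the unit sphere `S^{n-1} ⊆ ℝⁿ`. -/
def sphereUniform (n : ℕ) : Measure (Metric.sphere (0 : EuclideanSpace ℝ (Fin n)) 1) :=
  ((volume : Measure (EuclideanSpace ℝ (Fin n))).toSphere Set.univ)⁻¹ •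
    (volume : Measure (EuclideanSpace ℝ (Fin n))).toSphere

/-- The standard normal distribution function `Φ`. -/
def stdNormalCDF (x : ℝ) : ℝ := ((gaussianReal 0 1) (Set.Iic x)).toReal

/-- The Kolmogorov distance `ρ(F,G) = sup_x |F(x) − G(x)|`. -/
def kolmogorovDist (F G : ℝ → ℝ) : ℝ := ⨆ x : ℝ, |F x - G x|

variable {Ω : Type*} [MeasurableSpace Ω] {n : ℕ}

/-- The distribution function of a real random variable `S` on `(Ω, μ)`. -/
def cdfOf (μ : Measure Ω) (S : Ω → ℝ) (x : ℝ) : ℝ := (μ {ω | S ω ≤ x}).toReal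

/-- `X` is isotropic: the components have mean zero and identity covariance. -/
def IsIsotropic (μ : Measure Ω) (X : Ω → EuclideanSpace ℝ (Fin n)) : Prop :=
  (∀ i, ∫ ω, X ω i ∂μ = 0) ∧
    ∀ i j, ∫ ω, X ω i * X ω j ∂μ = if i = j then (1 : ℝ) else 0

/-- The set of admissible constants `Λ` in the second order correlation condition
`Var(Σ_{i,j} a_{ij} X_i X_j) ≤ Λ Σ_{i,j} a_{ij}²`. -/
def corrSet (μ : Measure Ω) (X : Ω → EuclideanSpace ℝ (Fin n)) : Set ℝ :=
  {L | 0 ≤ L ∧ ∀ a : Fin n → Fin n → ℝ,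
    variance (fun ω => ∑ i, ∑ j, a i j * (X ω i * X ω j)) μ ≤ L * ∑ i, ∑ j, (a i j) ^ 2}

/-- `Λ(X)`: the smallest constant in the second order correlation condition. -/
def corrConst (μ : Measure Ω) (X : Ω → EuclideanSpace ℝ (Fin n)) : ℝ := sInf (corrSet μ X)

/-- `σ₄²(X) = Var(|X|²)/n`. -/
def sigma4sq (μ : Measure Ω) (X : Ω → EuclideanSpace ℝ (Fin n)) : ℝ :=
  (1 / (n : ℝ)) * variance (fun ω => ‖X ω‖ ^ 2) μ

/-! Testing the correlation condition on the matrix units `a = E_{ij}` gives `Var(X_i X_j) ≤ Λ`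
for each of the `n²` pairs. Summing, `n² Λ ≥ ∑_{ij} Var(X_i X_j) = E|X|⁴ − ∑_{ij} (E X_i X_j)² =
E|X|⁴ − n ≥ (E|X|²)² − n = n² − n`. The fourth moment makes `Λ = E|X|⁴` admissible
(Cauchy–Schwarz), so `Λ(X)` is the infimum of a nonempty set rather than the junk value `sInf ∅ = 0`.
-/

open Finset

section EuclideanSpace

variable {ι : Type*} [Fintype ι]

lemma EuclideanSpace.sum_sum_sq_mul_apply (x : EuclideanSpace ℝ ι) :
    ∑ i, ∑ j, (x i * x j) ^ 2 = ‖x‖ ^ 4 := by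
  rw [show ‖x‖ ^ 4 = (‖x‖ ^ 2) ^ 2 by ring, EuclideanSpace.real_norm_sq_eq, sq, sum_mul_sum]
  simp only [mul_pow]

lemma EuclideanSpace.sq_sum_sum_mul_apply_le (a : ι → ι → ℝ) (x : EuclideanSpace ℝ ι) :
    (∑ i, ∑ j, a i j * (x i * x j)) ^ 2 ≤ (∑ i, ∑ j, a i j ^ 2) * ‖x‖ ^ 4 := by
  rw [← EuclideanSpace.sum_sum_sq_mul_apply, ← Fintype.sum_prod_type', ← Fintype.sum_prod_type',
    ← Fintype.sum_prod_type']
  exact sum_mul_sq_le_sq_mul_sq univ (fun p : ι × ι => a p.1 p.2) (fun p => x p.1 * x p.2)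

lemma EuclideanSpace.abs_apply_mul_apply_le (x : EuclideanSpace ℝ ι) (i j : ι) :
    |x i * x j| ≤ ‖x‖ ^ 2 := by
  rw [abs_mul, sq]
  exact mul_le_mul (PiLp.norm_apply_le x i) (PiLp.norm_apply_le x j) (abs_nonneg _)
    (norm_nonneg _)

end EuclideanSpace

lemma memLp_two_norm_sq {E : Type*} [NormedAddCommGroup E] {μ : Measure Ω} {Y : Ω → E}
    (hY : AEStronglyMeasurable Y μ) (h4 : Integrable (fun ω => ‖Y ω‖ ^ 4) μ) :
    MemLp (fun ω => ‖Y ω‖ ^ 2) 2 μ := by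
  refine (memLp_two_iff_integrable_sq (by fun_prop)).2 ?_
  simpa only [← pow_mul] using h4

section Moments

variable {μ : Measure Ω} {X : Ω → EuclideanSpace ℝ (Fin n)}

lemma memLp_two_apply_mul_apply (hX : AEStronglyMeasurable X μ)
    (h4 : Integrable (fun ω => ‖X ω‖ ^ 4) μ) (i j : Fin n) :
    MemLp (fun ω => X ω i * X ω j) 2 μ := by
  have hXi (k : Fin n) : AEStronglyMeasurable (fun ω => X ω k) μ :=
    (PiLp.continuous_apply 2 _ k).comp_aestronglyMeasurable hX
  refine (memLp_two_norm_sq hX h4).of_le ((hXi i).mul (hXi j)) (ae_of_all _ fun ω => ?_)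
  simpa only [Real.norm_eq_abs, abs_pow, abs_norm] using
    EuclideanSpace.abs_apply_mul_apply_le (X ω) i j

lemma integral_norm_pow_four_mem_corrSet [IsProbabilityMeasure μ]
    (hX : AEStronglyMeasurable X μ) (h4 : Integrable (fun ω => ‖X ω‖ ^ 4) μ) :
    ∫ ω, ‖X ω‖ ^ 4 ∂μ ∈ corrSet μ X := by
  refine ⟨integral_nonneg fun ω => by positivity, fun a => ?_⟩
  have hQ : MemLp (fun ω => ∑ i, ∑ j, a i j * (X ω i * X ω j)) 2 μ :=
    memLp_finsetSum _ fun i _ => memLp_finsetSum _ fun j _ =>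
      (memLp_two_apply_mul_apply hX h4 i j).const_mul (a i j)
  calc variance (fun ω => ∑ i, ∑ j, a i j * (X ω i * X ω j)) μ
      ≤ ∫ ω, (∑ i, ∑ j, a i j * (X ω i * X ω j)) ^ 2 ∂μ :=
        variance_le_expectation_sq hQ.aestronglyMeasurable
    _ ≤ ∫ ω, (∑ i, ∑ j, a i j ^ 2) * ‖X ω‖ ^ 4 ∂μ :=
        integral_mono_of_nonneg (ae_of_all _ fun ω => sq_nonneg _) (h4.const_mul _)
          (ae_of_all _ fun ω => EuclideanSpace.sq_sum_sum_mul_apply_le a (X ω))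
    _ = (∫ ω, ‖X ω‖ ^ 4 ∂μ) * ∑ i, ∑ j, a i j ^ 2 := by rw [integral_const_mul, mul_comm]

lemma variance_apply_mul_apply_le_of_mem_corrSet {L : ℝ} (hL : L ∈ corrSet μ X) (i j : Fin n) :
    variance (fun ω => X ω i * X ω j) μ ≤ L := by
  simpa [Matrix.single_apply, ite_and] using hL.2 (Matrix.single i j 1)

end Moments

namespace IsIsotropic

variable {μ : Measure Ω} {X : Ω → EuclideanSpace ℝ (Fin n)}

lemma integral_sq_apply (hiso : IsIsotropic μ X) (i : Fin n) : ∫ ω, X ω i ^ 2 ∂μ = 1 := by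
  simpa only [sq, if_true] using hiso.2 i i

lemma integral_norm_sq (hiso : IsIsotropic μ X) : ∫ ω, ‖X ω‖ ^ 2 ∂μ = n := by
  have hint (i : Fin n) : Integrable (fun ω => X ω i ^ 2) μ :=
    .of_integral_ne_zero (by simp [hiso.integral_sq_apply])
  simp_rw [EuclideanSpace.real_norm_sq_eq]
  rw [integral_finsetSum _ fun i _ => hint i]
  simp [hiso.integral_sq_apply]

lemma sq_le_integral_norm_pow_four [IsProbabilityMeasure μ] (hiso : IsIsotropic μ X)
    (hX : AEStronglyMeasurable X μ) (h4 : Integrable (fun ω => ‖X ω‖ ^ 4) μ) :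
    (n : ℝ) ^ 2 ≤ ∫ ω, ‖X ω‖ ^ 4 ∂μ := by
  have h := variance_nonneg (fun ω => ‖X ω‖ ^ 2) μ
  rw [variance_eq_sub (memLp_two_norm_sq hX h4)] at h
  simp only [Pi.pow_apply, ← pow_mul, hiso.integral_norm_sq] at h
  linarith

lemma sum_sum_variance_apply_mul_apply [IsProbabilityMeasure μ] (hiso : IsIsotropic μ X)
    (hX : AEStronglyMeasurable X μ) (h4 : Integrable (fun ω => ‖X ω‖ ^ 4) μ) :
    ∑ i, ∑ j, variance (fun ω => X ω i * X ω j) μ = ∫ ω, ‖X ω‖ ^ 4 ∂μ - n := by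
  have hint (i j : Fin n) : Integrable (fun ω => (X ω i * X ω j) ^ 2) μ :=
    (memLp_two_apply_mul_apply hX h4 i j).integrable_sq
  calc ∑ i, ∑ j, variance (fun ω => X ω i * X ω j) μ
      = ∑ i, ∑ j, (∫ ω, (X ω i * X ω j) ^ 2 ∂μ - (if i = j then 1 else 0) ^ 2) := by
        refine sum_congr rfl fun i _ => sum_congr rfl fun j _ => ?_
        rw [variance_eq_sub (memLp_two_apply_mul_apply hX h4 i j), ← hiso.2 i j]
        rfl
    _ = ∫ ω, ∑ i, ∑ j, (X ω i * X ω j) ^ 2 ∂μ - n := by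
        simp [sum_sub_distrib, integral_finsetSum, hint, integrable_finsetSum]
    _ = ∫ ω, ‖X ω‖ ^ 4 ∂μ - n := by simp_rw [EuclideanSpace.sum_sum_sq_mul_apply]

lemma div_le_of_mem_corrSet [IsProbabilityMeasure μ] (hiso : IsIsotropic μ X)
    (hX : AEStronglyMeasurable X μ) (h4 : Integrable (fun ω => ‖X ω‖ ^ 4) μ) {L : ℝ}
    (hL : L ∈ corrSet μ X) : ((n : ℝ) - 1) / n ≤ L := by
  rcases n.eq_zero_or_pos with rfl | hn
  · simpa using hL.1
  have hn' : (0 : ℝ) < n := by exact_mod_cast hn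
  have key : (n : ℝ) * (n - 1) ≤ n * (L * n) := calc
    (n : ℝ) * (n - 1) ≤ ∫ ω, ‖X ω‖ ^ 4 ∂μ - n := by
      linarith [hiso.sq_le_integral_norm_pow_four hX h4]
    _ = ∑ i, ∑ j, variance (fun ω => X ω i * X ω j) μ :=
      (hiso.sum_sum_variance_apply_mul_apply hX h4).symm
    _ ≤ ∑ _i : Fin n, ∑ _j : Fin n, L := sum_le_sum fun i _ => sum_le_sum fun j _ =>
      variance_apply_mul_apply_le_of_mem_corrSet hL i j
    _ = n * (L * n) := by simp only [sum_const, card_univ, Fintype.card_fin, nsmul_eq_mul]; ring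
  rw [div_le_iff₀ hn']
  exact le_of_mul_le_mul_left key hn'

end IsIsotropic

theorem statement4_general {Ω : Type*} [MeasurableSpace Ω] (μ : Measure Ω) [IsProbabilityMeasure μ]
    {n : ℕ} (X : Ω → EuclideanSpace ℝ (Fin n)) (hX : Measurable X)
    (h4 : Integrable (fun ω => ‖X ω‖ ^ 4) μ)
    (hiso : IsIsotropic μ X) :
    ((n : ℝ) - 1) / n ≤ corrConst μ X :=
  le_csInf ⟨_, integral_norm_pow_four_mem_corrSet hX.aestronglyMeasurable h4⟩
    fun _ hL => hiso.div_le_of_mem_corrSet hX.aestronglyMeasurable h4 hL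

/-- If `X` is an isotropic random vector in `ℝⁿ` (`n ≥ 2`) with finite
fourth moments, then `Λ(X) ≥ (n−1)/n`. -/
theorem statement4 {Ω : Type*} [MeasurableSpace Ω] (μ : Measure Ω) [IsProbabilityMeasure μ]
    {n : ℕ} (hn : 2 ≤ n) (X : Ω → EuclideanSpace ℝ (Fin n)) (hX : Measurable X)
    (h4 : Integrable (fun ω => ‖X ω‖ ^ 4) μ)
    (hiso : IsIsotropic μ X) :
    ((n : ℝ) - 1) / n ≤ corrConst μ X :=
  statement4_general μ X hX h4 hiso
end
end

section
/- If X_1,…,X_n are independent random variables with mean zero and finite fourth moments, then Λ(X) ≤ 2 max_i E X_i^4. -/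
open MeasureTheory ProbabilityTheory Real
open scoped RealInnerProductSpace ENNReal Pointwise

noncomputable section

variable {Ω : Type*} [MeasurableSpace Ω] {n : ℕ}

/-! With `Y_{ij} = X_i X_j`, the variance of `∑ a_{ij} Y_{ij}` is the quadratic form
`∑ a_{ij} a_{kl} cov(Y_{ij}, Y_{kl})`. By independence and centering, `cov(Y_{ij}, Y_{kl})`
vanishes unless `(k, l)` is `(i, j)` or `(j, i)`, so each row of the covariance matrix has at
most two nonzero entries. Each entry is at most `M = maxᵢ E Xᵢ⁴` in absolute value, because
`|cov(Y, Z)| ≤ (Var Y + Var Z) / 2` and `Var Y_{ij} ≤ E Xᵢ² Xⱼ² ≤ (E Xᵢ⁴ + E Xⱼ⁴) / 2`, and such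
a quadratic form is at most `2 M ∑ a_{ij}²`. -/

theorem sum_sum_mul_mul_le_two_mul_sum_sq {κ : Type*} [Fintype κ] [DecidableEq κ] (σ : κ ≃ κ)
    {G : κ → κ → ℝ} {M : ℝ} (hG : ∀ p q, |G p q| ≤ M)
    (hsupp : ∀ p q, q ≠ p → q ≠ σ p → G p q = 0) (a : κ → ℝ) :
    ∑ p, ∑ q, a p * a q * G p q ≤ 2 * M * ∑ p, a p ^ 2 := by
  have hterm : ∀ p q, a p * a q * G p q ≤
      M / 2 * (a p ^ 2 + a q ^ 2) * ((if q = p then 1 else 0) + (if q = σ p then 1 else 0)) := by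
    intro p q
    have hM : 0 ≤ M := (abs_nonneg _).trans (hG p q)
    by_cases hq : q = p ∨ q = σ p
    · have hcount : 1 ≤ (if q = p then (1 : ℝ) else 0) + (if q = σ p then 1 else 0) := by
        rcases hq with h | h <;> simp only [h] <;> split_ifs <;> norm_num
      calc a p * a q * G p q ≤ |a p * a q| * |G p q| := by
            rw [← abs_mul]; exact le_abs_self _
        _ ≤ (a p ^ 2 + a q ^ 2) / 2 * M := by
            gcongr
            · rw [abs_mul]; nlinarith [sq_nonneg (|a p| - |a q|), sq_abs (a p), sq_abs (a q)]
            · exact hG p q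
        _ = M / 2 * (a p ^ 2 + a q ^ 2) * 1 := by ring
        _ ≤ _ := mul_le_mul_of_nonneg_left hcount (by positivity)
    · obtain ⟨hqp, hqσ⟩ := not_or.1 hq
      simp [hsupp p q hqp hqσ, hqp, hqσ]
  calc ∑ p, ∑ q, a p * a q * G p q
      ≤ ∑ p, ∑ q, M / 2 * (a p ^ 2 + a q ^ 2) *
          ((if q = p then 1 else 0) + (if q = σ p then 1 else 0)) :=
        Finset.sum_le_sum fun p _ => Finset.sum_le_sum fun q _ => hterm p q
    _ = ∑ p, M / 2 * (3 * a p ^ 2 + a (σ p) ^ 2) := by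
        refine Finset.sum_congr rfl fun p _ => ?_
        simp only [mul_add, mul_ite, mul_one, mul_zero, Finset.sum_add_distrib,
          Finset.sum_ite_eq', Finset.mem_univ, ↓reduceIte]
        ring
    _ = 2 * M * ∑ p, a p ^ 2 := by
        rw [← Finset.mul_sum, Finset.sum_add_distrib, ← Finset.mul_sum,
          Equiv.sum_comp σ fun p => a p ^ 2]
        ring

section Moments

variable {μ : Measure Ω}

theorem abs_covariance_le_add_variance [IsFiniteMeasure μ] {Y Z : Ω → ℝ} (hY : MemLp Y 2 μ)
    (hZ : MemLp Z 2 μ) : |cov[Y, Z; μ]| ≤ (Var[Y; μ] + Var[Z; μ]) / 2 := by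
  have hadd := variance_add hY hZ ▸ variance_nonneg (Y + Z) μ
  have hsub := variance_sub hY hZ ▸ variance_nonneg (Y - Z) μ
  rw [abs_le]
  constructor <;> linarith

theorem sq_mul_le_add_pow_four (x y : ℝ) : (x * y) ^ 2 ≤ (x ^ 4 + y ^ 4) / 2 := by
  nlinarith [sq_nonneg (x ^ 2 - y ^ 2)]

variable {g h : Ω → ℝ}

theorem memLp_two_mul_of_integrable_pow_four (hg : Measurable g) (hh : Measurable h)
    (hg4 : Integrable (fun ω => g ω ^ 4) μ) (hh4 : Integrable (fun ω => h ω ^ 4) μ) :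
    MemLp (fun ω => g ω * h ω) 2 μ := by
  refine (memLp_two_iff_integrable_sq (by fun_prop)).2 ?_
  refine ((hg4.add hh4).div_const 2).mono' (by fun_prop) (ae_of_all _ fun ω => ?_)
  rw [norm_of_nonneg (sq_nonneg _)]
  exact sq_mul_le_add_pow_four (g ω) (h ω)

theorem integral_sq_mul_le (hg4 : Integrable (fun ω => g ω ^ 4) μ)
    (hh4 : Integrable (fun ω => h ω ^ 4) μ) (hgh : Integrable (fun ω => (g ω * h ω) ^ 2) μ) :
    ∫ ω, (g ω * h ω) ^ 2 ∂μ ≤ ((∫ ω, g ω ^ 4 ∂μ) + ∫ ω, h ω ^ 4 ∂μ) / 2 := by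
  rw [← integral_add hg4 hh4, ← integral_div]
  exact integral_mono hgh ((hg4.add hh4).div_const 2) fun ω => sq_mul_le_add_pow_four (g ω) (h ω)

end Moments

section Independent

variable {μ : Measure Ω} {ι : Type*} {f : ι → Ω → ℝ}

theorem integral_mul_eq_zero_of_notMem (hind : iIndepFun f μ) (hm : ∀ i, Measurable (f i))
    {i : ι} (hi : ∫ ω, f i ω ∂μ = 0) {T : Finset ι} (hiT : i ∉ T) {F : (T → ℝ) → ℝ}
    (hF : Measurable F) : ∫ ω, f i ω * F (fun s => f s ω) ∂μ = 0 := by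
  have hindep := (hind.indepFun_finset {i} T (Finset.disjoint_singleton_left.2 hiT) hm).comp
    (measurable_pi_apply ⟨i, Finset.mem_singleton_self i⟩) hF
  have hfactor := hindep.integral_mul_eq_mul_integral
    (hm i).aestronglyMeasurable (hF.comp (by fun_prop)).aestronglyMeasurable
  exact hfactor.trans (by simp [hi])

theorem integral_mul_eq_zero_of_ne (hind : iIndepFun f μ) (hm : ∀ i, Measurable (f i))
    {i j : ι} (hi : ∫ ω, f i ω ∂μ = 0) (hij : i ≠ j) : ∫ ω, f i ω * f j ω ∂μ = 0 :=
  integral_mul_eq_zero_of_notMem hind hm hi (T := {j}) (by simpa using hij)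
    (F := fun y => y ⟨j, Finset.mem_singleton_self j⟩) (measurable_pi_apply _)

theorem covariance_mul_mul_eq_zero_of_ne_of_ne_of_ne [DecidableEq ι] (hind : iIndepFun f μ)
    (hm : ∀ i, Measurable (f i)) {i j k l : ι} (hi : ∫ ω, f i ω ∂μ = 0) (hij : i ≠ j)
    (hik : i ≠ k) (hil : i ≠ l) :
    cov[fun ω => f i ω * f j ω, fun ω => f k ω * f l ω; μ] = 0 := by
  set c := ∫ ω, f k ω * f l ω ∂μ
  have hzero := integral_mul_eq_zero_of_notMem hind hm hi (T := {j, k, l}) (by simp [*])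
    (F := fun y => y ⟨j, by simp⟩ * (y ⟨k, by simp⟩ * y ⟨l, by simp⟩ - c)) (by fun_prop)
  rw [covariance, integral_mul_eq_zero_of_ne hind hm hi hij]
  simpa [mul_assoc] using hzero

theorem covariance_mul_self_mul_self_eq_zero (hind : iIndepFun f μ)
    (hm : ∀ i, Measurable (f i)) (h4 : ∀ i, Integrable (fun ω => f i ω ^ 4) μ) {i k : ι}
    (hik : i ≠ k) : cov[fun ω => f i ω * f i ω, fun ω => f k ω * f k ω; μ] = 0 :=
  ((hind.indepFun hik).comp (φ := fun x => x * x) (ψ := fun x => x * x) (by fun_prop)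
    (by fun_prop)).covariance_eq_zero
    (memLp_two_mul_of_integrable_pow_four (hm i) (hm i) (h4 i) (h4 i))
    (memLp_two_mul_of_integrable_pow_four (hm k) (hm k) (h4 k) (h4 k))

theorem covariance_mul_mul_eq_zero [DecidableEq ι] (hind : iIndepFun f μ)
    (hm : ∀ i, Measurable (f i)) (hmean : ∀ i, ∫ ω, f i ω ∂μ = 0)
    (h4 : ∀ i, Integrable (fun ω => f i ω ^ 4) μ) {p q : ι × ι} (hqp : q ≠ p)
    (hqs : q ≠ p.swap) :
    cov[fun ω => f p.1 ω * f p.2 ω, fun ω => f q.1 ω * f q.2 ω; μ] = 0 := by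
  obtain ⟨i, j⟩ := p
  obtain ⟨k, l⟩ := q
  have hcomm : ∀ a b, (fun ω => f a ω * f b ω) = fun ω => f b ω * f a ω :=
    fun a b => funext fun ω => mul_comm _ _
  -- Unless both pairs are diagonal, some index occurs only once among `i, j, k, l`.
  obtain ⟨rfl, rfl, hik⟩ | ⟨hij, hik, hil⟩ | ⟨hji, hjk, hjl⟩ | ⟨hki, hkj, hkl⟩ | ⟨hli, hlj, hlk⟩ :
      (i = j ∧ k = l ∧ i ≠ k) ∨ (i ≠ j ∧ i ≠ k ∧ i ≠ l) ∨ (j ≠ i ∧ j ≠ k ∧ j ≠ l) ∨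
        (k ≠ i ∧ k ≠ j ∧ k ≠ l) ∨ (l ≠ i ∧ l ≠ j ∧ l ≠ k) := by
    simp only [ne_eq, Prod.ext_iff, Prod.swap] at hqp hqs
    grind
  · exact covariance_mul_self_mul_self_eq_zero hind hm h4 hik
  · exact covariance_mul_mul_eq_zero_of_ne_of_ne_of_ne hind hm (hmean i) hij hik hil
  · rw [hcomm i j]
    exact covariance_mul_mul_eq_zero_of_ne_of_ne_of_ne hind hm (hmean j) hji hjk hjl
  · rw [covariance_comm]
    exact covariance_mul_mul_eq_zero_of_ne_of_ne_of_ne hind hm (hmean k) hkl hki hkj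
  · rw [covariance_comm, hcomm k l]
    exact covariance_mul_mul_eq_zero_of_ne_of_ne_of_ne hind hm (hmean l) hlk hli hlj

theorem variance_sum_mul_mul_le [Fintype ι] [DecidableEq ι] [IsProbabilityMeasure μ]
    (hind : iIndepFun f μ) (hm : ∀ i, Measurable (f i)) (hmean : ∀ i, ∫ ω, f i ω ∂μ = 0)
    (h4 : ∀ i, Integrable (fun ω => f i ω ^ 4) μ) {M : ℝ} (hM : ∀ i, ∫ ω, f i ω ^ 4 ∂μ ≤ M)
    (a : ι × ι → ℝ) :
    Var[fun ω => ∑ p, a p * (f p.1 ω * f p.2 ω); μ] ≤ 2 * M * ∑ p, a p ^ 2 := by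
  have hL2 : ∀ p : ι × ι, MemLp (fun ω => f p.1 ω * f p.2 ω) 2 μ := fun p =>
    memLp_two_mul_of_integrable_pow_four (hm _) (hm _) (h4 _) (h4 _)
  have hvar : ∀ p : ι × ι, Var[fun ω => f p.1 ω * f p.2 ω; μ] ≤ M := fun p =>
    calc _ ≤ ∫ ω, (f p.1 ω * f p.2 ω) ^ 2 ∂μ :=
          variance_le_expectation_sq (hL2 p).aestronglyMeasurable
      _ ≤ ((∫ ω, f p.1 ω ^ 4 ∂μ) + ∫ ω, f p.2 ω ^ 4 ∂μ) / 2 :=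
          integral_sq_mul_le (h4 _) (h4 _) (hL2 p).integrable_sq
      _ ≤ M := by linarith [hM p.1, hM p.2]
  rw [variance_fun_sum fun p => (hL2 p).const_mul (a p)]
  simp_rw [covariance_const_mul_left, covariance_const_mul_right, ← mul_assoc]
  refine sum_sum_mul_mul_le_two_mul_sum_sq (Equiv.prodComm ι ι) (fun p q => ?_)
    (fun p q hqp hqs => covariance_mul_mul_eq_zero hind hm hmean h4 hqp hqs) a
  calc _ ≤ (Var[fun ω => f p.1 ω * f p.2 ω; μ] + Var[fun ω => f q.1 ω * f q.2 ω; μ]) / 2 :=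
        abs_covariance_le_add_variance (hL2 p) (hL2 q)
    _ ≤ M := by linarith [hvar p, hvar q]

end Independent

theorem statement6_general {Ω : Type*} [MeasurableSpace Ω] (μ : Measure Ω) [IsProbabilityMeasure μ]
    {n : ℕ} (X : Ω → EuclideanSpace ℝ (Fin n)) (hX : Measurable X)
    (h4 : Integrable (fun ω => ‖X ω‖ ^ 4) μ)
    (hind : iIndepFun (fun i ω => X ω i) μ)
    (hmean : ∀ i, ∫ ω, X ω i ∂μ = 0) :
    corrConst μ X ≤ 2 * ⨆ i : Fin n, ∫ ω, (X ω i) ^ 4 ∂μ := by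
  have hm : ∀ i, Measurable fun ω => X ω i := fun i => by fun_prop
  have h4i : ∀ i, Integrable (fun ω => X ω i ^ 4) μ := fun i =>
    h4.mono' ((hm i).pow_const 4).aestronglyMeasurable (ae_of_all _ fun ω => by
      rw [norm_pow]
      exact pow_le_pow_left₀ (norm_nonneg _) (PiLp.norm_apply_le _ _) 4)
  set M := ⨆ i : Fin n, ∫ ω, (X ω i) ^ 4 ∂μ
  have hM : ∀ i, ∫ ω, X ω i ^ 4 ∂μ ≤ M := le_ciSup (Set.finite_range _).bddAbove
  have hM0 : 0 ≤ M := Real.iSup_nonneg fun i => integral_nonneg fun ω => by positivity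
  refine csInf_le ⟨0, fun L hL => hL.1⟩ ⟨by positivity, fun a => ?_⟩
  simpa only [Fintype.sum_prod_type] using
    variance_sum_mul_mul_le hind hm hmean h4i hM fun p => a p.1 p.2

/-- If `X₁,…,Xₙ` are independent with mean zero and finite fourth moments,
then `Λ(X) ≤ 2 maxᵢ E Xᵢ⁴`. -/
theorem statement6 {Ω : Type*} [MeasurableSpace Ω] (μ : Measure Ω) [IsProbabilityMeasure μ]
    {n : ℕ} (hn : 1 ≤ n) (X : Ω → EuclideanSpace ℝ (Fin n)) (hX : Measurable X)
    (h4 : Integrable (fun ω => ‖X ω‖ ^ 4) μ)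
    (hind : iIndepFun (fun i ω => X ω i) μ)
    (hmean : ∀ i, ∫ ω, X ω i ∂μ = 0) :
    corrConst μ X ≤ 2 * ⨆ i : Fin n, ∫ ω, (X ω i) ^ 4 ∂μ :=
  statement6_general μ X hX h4 hind hmean
end
end

section
/- If the random vector X = (X_1,…,X_n) in R^n has a coordinate-wise symmetric distribution and finite fourth moments, then V(X) ≤ Λ(X) ≤ 2 max_i E X_i^4 + V(X). -/
open MeasureTheory ProbabilityTheory Real
open scoped RealInnerProductSpace ENNReal Pointwise

noncomputable section

variable {Ω : Type*} [MeasurableSpace Ω] {n : ℕ}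

/-- `X` has a coordinate-wise symmetric distribution: for every choice of signs
`ε ∈ {−1,1}ⁿ`, `(ε₁X₁,…,εₙXₙ)` has the same distribution as `X`. -/
def CoordinatewiseSymmetric (μ : Measure Ω) (X : Ω → EuclideanSpace ℝ (Fin n)) : Prop :=
  ∀ ε : Fin n → ℝ, (∀ i, ε i = 1 ∨ ε i = -1) →
    Measure.map (fun ω => (WithLp.toLp 2 (fun i => ε i * X ω i) : EuclideanSpace ℝ (Fin n))) μ
      = Measure.map X μ

/-- `V(X) = sup_{θ ∈ S^{n-1}} Var(θ₁X₁² + … + θₙXₙ²)`. -/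
def Vfunc (μ : Measure Ω) (X : Ω → EuclideanSpace ℝ (Fin n)) : ℝ :=
  ⨆ θ : Metric.sphere (0 : EuclideanSpace ℝ (Fin n)) 1,
    variance (fun ω => ∑ i, (θ : EuclideanSpace ℝ (Fin n)) i * (X ω i) ^ 2) μ

/-!
Split `∑ aᵢⱼ XᵢXⱼ = D + O` into its diagonal part `D = ∑ aᵢᵢ Xᵢ²` and its off-diagonal part `O`.
Flipping the sign of a single coordinate shows that a moment `E[Xᵢ Xⱼ Xₖ Xₗ]` vanishes as soon
as some index occurs an odd number of times. Hence `D` and `O` are uncorrelated, and in `Var O`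
only the pairs `(k, l) = (i, j)` and `(k, l) = (j, i)` survive:
`Var O = ∑_{i ≠ j} aᵢⱼ (aᵢⱼ + aⱼᵢ) E[Xᵢ² Xⱼ²] ≤ 2 maxᵢ E[Xᵢ⁴] ∑_{i ≠ j} aᵢⱼ²`,
while `Var D ≤ V(X) ∑ aᵢᵢ²` by the definition of `V`. Diagonal matrices give `V(X) ≤ Λ(X)`.
-/

theorem abs_sum_mul_sq_le {ι : Type*} [Fintype ι] (θ x : EuclideanSpace ℝ ι) :
    |∑ i, θ i * x i ^ 2| ≤ ‖θ‖ * ‖x‖ ^ 2 := by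
  calc |∑ i, θ i * x i ^ 2| ≤ ∑ i, |θ i * x i ^ 2| := Finset.abs_sum_le_sum_abs _ _
    _ ≤ ∑ i, ‖θ‖ * x i ^ 2 := Finset.sum_le_sum fun i _ => by
        rw [abs_mul, abs_of_nonneg (sq_nonneg (x i))]
        exact mul_le_mul_of_nonneg_right (PiLp.norm_apply_le θ i) (sq_nonneg _)
    _ = ‖θ‖ * ‖x‖ ^ 2 := by rw [← Finset.mul_sum, EuclideanSpace.real_norm_sq_eq]

theorem sq_mul_le_norm_pow_four {ι : Type*} [Fintype ι] (x : EuclideanSpace ℝ ι) (i j : ι) :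
    (x i * x j) ^ 2 ≤ ‖x‖ ^ 4 := by
  have hx : ∀ k, x k ^ 2 ≤ ‖x‖ ^ 2 := fun k =>
    sq_le_sq.2 ((abs_norm x).symm ▸ PiLp.norm_apply_le x k)
  calc (x i * x j) ^ 2 = x i ^ 2 * x j ^ 2 := mul_pow _ _ _
    _ ≤ ‖x‖ ^ 2 * ‖x‖ ^ 2 := mul_le_mul (hx i) (hx j) (sq_nonneg _) (sq_nonneg _)
    _ = ‖x‖ ^ 4 := by ring

theorem sum_sum_eq_sum_diag_add_sum_offDiag {ι M : Type*} [Fintype ι] [DecidableEq ι]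
    [AddCommMonoid M] (f : ι → ι → M) :
    ∑ i, ∑ j, f i j = ∑ i, f i i + ∑ p : ι × ι, if p.1 = p.2 then 0 else f p.1 p.2 := by
  have hsplit : ∀ i j, f i j = (if i = j then f i i else 0) + if i = j then 0 else f i j := by
    intro i j
    split_ifs with h
    · subst h; simp
    · simp
  rw [Fintype.sum_prod_type, ← Finset.sum_add_distrib]
  exact Finset.sum_congr rfl fun i _ => by
    rw [Finset.sum_congr rfl fun j _ => hsplit i j, Finset.sum_add_distrib, Finset.sum_ite_eq,
      if_pos (Finset.mem_univ i)]

theorem sum_mul_add_swap_mul_le {α : Type*} [Fintype α] (b m : α × α → ℝ) {M : ℝ}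
    (hm₀ : ∀ p, 0 ≤ m p) (hmM : ∀ p, m p ≤ M) :
    ∑ p : α × α, b p * (b p + b p.swap) * m p ≤ 2 * M * ∑ p, b p ^ 2 := by
  have hswap : ∑ p : α × α, b p.swap ^ 2 = ∑ p, b p ^ 2 :=
    Equiv.sum_comp (Equiv.prodComm α α) fun p => b p ^ 2
  calc ∑ p, b p * (b p + b p.swap) * m p
      ≤ ∑ p, (3 / 2 * b p ^ 2 + 1 / 2 * b p.swap ^ 2) * M := Finset.sum_le_sum fun p _ => by
        have hB : b p * (b p + b p.swap) ≤ 3 / 2 * b p ^ 2 + 1 / 2 * b p.swap ^ 2 := by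
          nlinarith [sq_nonneg (b p - b p.swap)]
        have hB₀ : 0 ≤ 3 / 2 * b p ^ 2 + 1 / 2 * b p.swap ^ 2 := by positivity
        nlinarith [mul_le_mul_of_nonneg_right hB (hm₀ p), mul_le_mul_of_nonneg_left (hmM p) hB₀]
    _ = 2 * M * ∑ p, b p ^ 2 := by
        simp only [add_mul, Finset.sum_add_distrib, ← Finset.sum_mul, ← Finset.mul_sum, hswap]
        ring

theorem variance_sum_const_mul {ι : Type*} [Fintype ι] {μ : Measure Ω} [IsFiniteMeasure μ]
    (Z : ι → Ω → ℝ) (hZ : ∀ i, MemLp (Z i) 2 μ) (c : ι → ℝ) :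
    Var[fun ω => ∑ i, c i * Z i ω; μ] = ∑ i, ∑ j, c i * c j * cov[Z i, Z j; μ] := by
  have hcZ : ∀ i, MemLp (fun ω => c i * Z i ω) 2 μ := fun i => (hZ i).const_mul (c i)
  rw [← covariance_self (memLp_finsetSum _ fun i _ => hcZ i).aemeasurable,
    covariance_fun_sum_fun_sum hcZ hcZ]
  simp only [covariance_const_mul_left, covariance_const_mul_right]
  exact Finset.sum_congr rfl fun i _ => Finset.sum_congr rfl fun j _ => by ring

variable {μ : Measure Ω} {X : Ω → EuclideanSpace ℝ (Fin n)}

theorem integral_list_prod_coord_eq_zero (hX : Measurable X)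
    (hsym : CoordinatewiseSymmetric μ X) (l : List (Fin n)) {p : Fin n}
    (hp : Odd (l.count p)) : ∫ ω, (l.map fun i => X ω i).prod ∂μ = 0 := by
  set ε : Fin n → ℝ := fun q => if q = p then -1 else 1
  set g : EuclideanSpace ℝ (Fin n) → ℝ := fun x => (l.map fun i => x i).prod
  have hg : Continuous g :=
    continuous_list_prod l fun i _ => (PiLp.continuous_apply 2 _ i)
  have hflip : Measurable fun ω =>
      (WithLp.toLp 2 fun i => ε i * X ω i : EuclideanSpace ℝ (Fin n)) := by
    fun_prop
  have hodd : ∀ x, g (WithLp.toLp 2 fun i => ε i * x i) = -g x := fun x => by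
    simp only [g, List.prod_map_mul]
    rw [List.prod_map_eq_pow_single p ε fun q hq _ => if_neg hq]
    simp [ε, hp.neg_one_pow]
  have hinv : ∫ ω, g (WithLp.toLp 2 fun i => ε i * X ω i) ∂μ = ∫ ω, g (X ω) ∂μ := by
    rw [← integral_map hflip.aemeasurable hg.aestronglyMeasurable,
      hsym ε fun q => by by_cases hq : q = p <;> simp [ε, hq],
      integral_map hX.aemeasurable hg.aestronglyMeasurable]
  simp only [hodd, integral_neg] at hinv
  change ∫ ω, g (X ω) ∂μ = 0
  linarith

theorem integral_coord_mul_coord_eq_zero (hX : Measurable X)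
    (hsym : CoordinatewiseSymmetric μ X) {i j : Fin n} (hij : i ≠ j) :
    ∫ ω, X ω i * X ω j ∂μ = 0 := by
  simpa using integral_list_prod_coord_eq_zero hX hsym [i, j] (p := i) (by simp [hij])

theorem integral_sq_coord_mul_coord_mul_coord_eq_zero (hX : Measurable X)
    (hsym : CoordinatewiseSymmetric μ X) (i : Fin n) {k l : Fin n} (hkl : k ≠ l) :
    ∫ ω, X ω i ^ 2 * (X ω k * X ω l) ∂μ = 0 := by
  have := integral_list_prod_coord_eq_zero hX hsym [i, i, k, l] (p := k)
    (by by_cases hik : i = k <;> simp [hik, hkl.symm, Nat.odd_iff])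
  simpa [sq, mul_assoc] using this

theorem integral_coord_mul_coord_mul_coord_mul_coord_eq_zero (hX : Measurable X)
    (hsym : CoordinatewiseSymmetric μ X) {i j k l : Fin n} (hij : i ≠ j)
    (h₁ : (k, l) ≠ (i, j)) (h₂ : (k, l) ≠ (j, i)) :
    ∫ ω, X ω i * X ω j * (X ω k * X ω l) ∂μ = 0 := by
  by_cases hj : j ≠ k ∧ j ≠ l
  · simpa [mul_assoc] using integral_list_prod_coord_eq_zero hX hsym [i, j, k, l] (p := j)
      (by simp [hij, hj.1.symm, hj.2.symm])
  · have hi : i ≠ k ∧ i ≠ l := by grind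
    simpa [mul_assoc] using integral_list_prod_coord_eq_zero hX hsym [i, j, k, l] (p := i)
      (by simp [hij.symm, hi.1.symm, hi.2.symm])

theorem integrable_coord_mul_coord_sq (hX : Measurable X)
    (h4 : Integrable (fun ω => ‖X ω‖ ^ 4) μ) (i j : Fin n) :
    Integrable (fun ω => (X ω i * X ω j) ^ 2) μ :=
  h4.mono' (by fun_prop) (ae_of_all _ fun ω => by
    rw [Real.norm_of_nonneg (sq_nonneg _)]
    exact sq_mul_le_norm_pow_four (X ω) i j)

theorem memLp_coord_mul_coord (hX : Measurable X) (h4 : Integrable (fun ω => ‖X ω‖ ^ 4) μ)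
    (i j : Fin n) : MemLp (fun ω => X ω i * X ω j) 2 μ :=
  (memLp_two_iff_integrable_sq (by fun_prop)).2 (integrable_coord_mul_coord_sq hX h4 i j)

theorem memLp_coord_sq (hX : Measurable X) (h4 : Integrable (fun ω => ‖X ω‖ ^ 4) μ)
    (i : Fin n) : MemLp (fun ω => X ω i ^ 2) 2 μ := by
  simpa only [sq] using memLp_coord_mul_coord hX h4 i i

theorem integral_coord_mul_coord_sq_le_iSup (hX : Measurable X)
    (h4 : Integrable (fun ω => ‖X ω‖ ^ 4) μ) (i j : Fin n) :
    ∫ ω, (X ω i * X ω j) ^ 2 ∂μ ≤ ⨆ k, ∫ ω, X ω k ^ 4 ∂μ := by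
  have hint : ∀ k, Integrable (fun ω => X ω k ^ 4) μ := fun k =>
    (integrable_coord_mul_coord_sq hX h4 k k).congr (ae_of_all _ fun ω => by ring)
  have hle : ∀ k, ∫ ω, X ω k ^ 4 ∂μ ≤ ⨆ k, ∫ ω, X ω k ^ 4 ∂μ :=
    le_ciSup (Set.finite_range _).bddAbove
  calc ∫ ω, (X ω i * X ω j) ^ 2 ∂μ ≤ ∫ ω, (X ω i ^ 4 + X ω j ^ 4) / 2 ∂μ :=
        integral_mono (integrable_coord_mul_coord_sq hX h4 i j)
          (((hint i).add (hint j)).div_const 2) fun ω => by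
            nlinarith [sq_nonneg (X ω i ^ 2 - X ω j ^ 2)]
    _ = (∫ ω, X ω i ^ 4 ∂μ + ∫ ω, X ω j ^ 4 ∂μ) / 2 := by
        rw [integral_div, integral_add (hint i) (hint j)]
    _ ≤ ⨆ k, ∫ ω, X ω k ^ 4 ∂μ := by linarith [hle i, hle j]

theorem variance_sum_mul_coord_sq_le [IsProbabilityMeasure μ] (hX : Measurable X)
    (h4 : Integrable (fun ω => ‖X ω‖ ^ 4) μ) {θ : EuclideanSpace ℝ (Fin n)} (hθ : ‖θ‖ ≤ 1) :
    Var[fun ω => ∑ i, θ i * X ω i ^ 2; μ] ≤ ∫ ω, ‖X ω‖ ^ 4 ∂μ := by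
  refine (variance_le_expectation_sq (by fun_prop)).trans <|
    integral_mono_of_nonneg (ae_of_all _ fun ω => sq_nonneg _) h4 (ae_of_all _ fun ω => ?_)
  have h := (abs_sum_mul_sq_le θ (X ω)).trans (mul_le_of_le_one_left (by positivity) hθ)
  calc (∑ i, θ i * X ω i ^ 2) ^ 2 = |∑ i, θ i * X ω i ^ 2| ^ 2 := (sq_abs _).symm
    _ ≤ (‖X ω‖ ^ 2) ^ 2 := pow_le_pow_left₀ (abs_nonneg _) h 2
    _ = ‖X ω‖ ^ 4 := by ring

theorem bddAbove_range_variance_sum_mul_coord_sq [IsProbabilityMeasure μ] (hX : Measurable X)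
    (h4 : Integrable (fun ω => ‖X ω‖ ^ 4) μ) :
    BddAbove (Set.range fun θ : Metric.sphere (0 : EuclideanSpace ℝ (Fin n)) 1 =>
      Var[fun ω => ∑ i, (θ : EuclideanSpace ℝ (Fin n)) i * X ω i ^ 2; μ]) :=
  ⟨_, Set.forall_mem_range.2 fun θ =>
    variance_sum_mul_coord_sq_le hX h4 (norm_eq_of_mem_sphere θ).le⟩

theorem variance_sum_mul_coord_sq_le_Vfunc [IsProbabilityMeasure μ] (hX : Measurable X)
    (h4 : Integrable (fun ω => ‖X ω‖ ^ 4) μ) (c : Fin n → ℝ) :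
    Var[fun ω => ∑ i, c i * X ω i ^ 2; μ] ≤ Vfunc μ X * ∑ i, c i ^ 2 := by
  set v : EuclideanSpace ℝ (Fin n) := WithLp.toLp 2 c
  have hv : ‖v‖ ^ 2 = ∑ i, c i ^ 2 := EuclideanSpace.real_norm_sq_eq v
  rcases eq_or_ne v 0 with hv₀ | hv₀
  · obtain rfl : c = 0 := by simpa [v] using hv₀
    simp [← Pi.zero_def, variance_zero]
  let θ : Metric.sphere (0 : EuclideanSpace ℝ (Fin n)) 1 :=
    ⟨‖v‖⁻¹ • v, by simp [norm_smul, hv₀]⟩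
  have hfun : (fun ω => ∑ i, c i * X ω i ^ 2)
      = fun ω => ‖v‖ * ∑ i, (θ : EuclideanSpace ℝ (Fin n)) i * X ω i ^ 2 := by
    funext ω
    rw [Finset.mul_sum]
    refine Finset.sum_congr rfl fun i _ => ?_
    have hv₀' : ‖v‖ ≠ 0 := norm_ne_zero_iff.2 hv₀
    simp only [θ, v, PiLp.smul_apply, smul_eq_mul] at hv₀' ⊢
    field_simp
  rw [hfun, variance_const_mul, hv, mul_comm]
  exact mul_le_mul_of_nonneg_right
    (le_ciSup (bddAbove_range_variance_sum_mul_coord_sq hX h4) θ) (hv ▸ by positivity)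

theorem Vfunc_nonneg : 0 ≤ Vfunc μ X :=
  Real.iSup_nonneg fun _ => variance_nonneg _ _

theorem Vfunc_le_of_mem_corrSet {L : ℝ} (hL : L ∈ corrSet μ X) : Vfunc μ X ≤ L := by
  refine Real.iSup_le (fun θ => ?_) hL.1
  have hθ : ∑ i, (θ : EuclideanSpace ℝ (Fin n)) i * (θ : EuclideanSpace ℝ (Fin n)) i = 1 := by
    simp_rw [← sq]
    rw [← EuclideanSpace.real_norm_sq_eq, norm_eq_of_mem_sphere θ, one_pow]
  simpa [ite_mul, sq, hθ] using
    hL.2 fun i j => if i = j then (θ : EuclideanSpace ℝ (Fin n)) i else 0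

section Symmetric

variable [IsProbabilityMeasure μ] (hX : Measurable X) (h4 : Integrable (fun ω => ‖X ω‖ ^ 4) μ)
  (hsym : CoordinatewiseSymmetric μ X)
include hX h4 hsym

theorem covariance_coord_sq_coord_mul_coord_eq_zero (i : Fin n) {k l : Fin n} (hkl : k ≠ l) :
    cov[fun ω => X ω i ^ 2, fun ω => X ω k * X ω l; μ] = 0 := by
  rw [covariance_eq_sub (memLp_coord_sq hX h4 i) (memLp_coord_mul_coord hX h4 k l)]
  simp only [Pi.mul_apply]
  rw [integral_sq_coord_mul_coord_mul_coord_eq_zero hX hsym i hkl,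
    integral_coord_mul_coord_eq_zero hX hsym hkl, mul_zero, sub_zero]

theorem covariance_coord_mul_coord_of_ne {p : Fin n × Fin n} (hp : p.1 ≠ p.2)
    (q : Fin n × Fin n) :
    cov[fun ω => X ω p.1 * X ω p.2, fun ω => X ω q.1 * X ω q.2; μ]
      = ((if q = p then 1 else 0) + if q = p.swap then 1 else 0)
          * ∫ ω, (X ω p.1 * X ω p.2) ^ 2 ∂μ := by
  rw [covariance_eq_sub (memLp_coord_mul_coord hX h4 p.1 p.2)
    (memLp_coord_mul_coord hX h4 q.1 q.2), integral_coord_mul_coord_eq_zero hX hsym hp,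
    zero_mul, sub_zero]
  simp only [Pi.mul_apply]
  obtain ⟨i, j⟩ := p
  obtain ⟨k, l⟩ := q
  have hswap : (j, i) ≠ (i, j) := by simpa [eq_comm] using hp
  by_cases h₁ : (k, l) = (i, j)
  · simp only [Prod.mk.injEq] at h₁
    obtain ⟨rfl, rfl⟩ := h₁
    simp [hswap.symm, sq]
  by_cases h₂ : (k, l) = (j, i)
  · simp only [Prod.mk.injEq] at h₂
    obtain ⟨rfl, rfl⟩ := h₂
    simp only [Prod.swap_prod_mk, if_pos, hswap, if_false]
    rw [zero_add, one_mul]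
    exact integral_congr_ae (ae_of_all _ fun ω => by ring)
  · rw [integral_coord_mul_coord_mul_coord_mul_coord_eq_zero hX hsym hp h₁ h₂]
    simp [h₁, h₂]

theorem variance_sum_offDiag (b : Fin n × Fin n → ℝ) (hb : ∀ i, b (i, i) = 0) :
    Var[fun ω => ∑ p, b p * (X ω p.1 * X ω p.2); μ]
      = ∑ p, b p * (b p + b p.swap) * ∫ ω, (X ω p.1 * X ω p.2) ^ 2 ∂μ := by
  rw [variance_sum_const_mul _ (fun p => memLp_coord_mul_coord hX h4 p.1 p.2) b]
  refine Finset.sum_congr rfl fun p _ => ?_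
  by_cases hp : p.1 = p.2
  · obtain ⟨i, j⟩ := p
    obtain rfl : i = j := hp
    simp [hb]
  · simp only [covariance_coord_mul_coord_of_ne hX h4 hsym hp]
    simp [mul_add, add_mul, Finset.sum_add_distrib, ite_mul, mul_ite, Finset.sum_ite_eq']

theorem variance_sum_diag_add_sum_offDiag (c : Fin n → ℝ) (b : Fin n × Fin n → ℝ)
    (hb : ∀ i, b (i, i) = 0) :
    Var[fun ω => ∑ i, c i * X ω i ^ 2 + ∑ p, b p * (X ω p.1 * X ω p.2); μ]
      = Var[fun ω => ∑ i, c i * X ω i ^ 2; μ]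
        + Var[fun ω => ∑ p, b p * (X ω p.1 * X ω p.2); μ] := by
  have hD : ∀ i, MemLp (fun ω => c i * X ω i ^ 2) 2 μ := fun i =>
    (memLp_coord_sq hX h4 i).const_mul (c i)
  have hO : ∀ p : Fin n × Fin n, MemLp (fun ω => b p * (X ω p.1 * X ω p.2)) 2 μ := fun p =>
    (memLp_coord_mul_coord hX h4 p.1 p.2).const_mul (b p)
  have hcov : cov[fun ω => ∑ i, c i * X ω i ^ 2, fun ω => ∑ p, b p * (X ω p.1 * X ω p.2); μ]
      = 0 := by
    rw [covariance_fun_sum_fun_sum hD hO]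
    refine Finset.sum_eq_zero fun i _ => Finset.sum_eq_zero fun p _ => ?_
    rw [covariance_const_mul_left, covariance_const_mul_right]
    by_cases hp : p.1 = p.2
    · obtain ⟨k, l⟩ := p
      obtain rfl : k = l := hp
      simp [hb]
    · rw [covariance_coord_sq_coord_mul_coord_eq_zero hX h4 hsym i hp, mul_zero, mul_zero]
  rw [variance_fun_add (memLp_finsetSum _ fun i _ => hD i) (memLp_finsetSum _ fun p _ => hO p),
    hcov, mul_zero, add_zero]

end Symmetric

theorem two_mul_iSup_add_Vfunc_mem_corrSet [IsProbabilityMeasure μ] (hX : Measurable X)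
    (h4 : Integrable (fun ω => ‖X ω‖ ^ 4) μ) (hsym : CoordinatewiseSymmetric μ X) :
    2 * (⨆ k, ∫ ω, X ω k ^ 4 ∂μ) + Vfunc μ X ∈ corrSet μ X := by
  have hM : 0 ≤ ⨆ k, ∫ ω, X ω k ^ 4 ∂μ :=
    Real.iSup_nonneg fun k => integral_nonneg fun ω => by positivity
  refine ⟨by linarith [Vfunc_nonneg (μ := μ) (X := X)], fun a => ?_⟩
  set b : Fin n × Fin n → ℝ := fun p => if p.1 = p.2 then 0 else a p.1 p.2
  have hb : ∀ i, b (i, i) = 0 := fun i => if_pos rfl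
  have hY : (fun ω => ∑ i, ∑ j, a i j * (X ω i * X ω j))
      = fun ω => ∑ i, a i i * X ω i ^ 2 + ∑ p, b p * (X ω p.1 * X ω p.2) := by
    funext ω
    simp [sum_sum_eq_sum_diag_add_sum_offDiag, b, sq, ite_mul]
  have ha : ∑ i, ∑ j, a i j ^ 2 = ∑ i, a i i ^ 2 + ∑ p, b p ^ 2 := by
    simp [sum_sum_eq_sum_diag_add_sum_offDiag, b, ite_pow]
  have hD := variance_sum_mul_coord_sq_le_Vfunc hX h4 fun i => a i i
  have hO := sum_mul_add_swap_mul_le b _ (fun p => integral_nonneg fun ω => sq_nonneg _)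
    fun p => integral_coord_mul_coord_sq_le_iSup hX h4 p.1 p.2
  rw [hY, variance_sum_diag_add_sum_offDiag hX h4 hsym _ b hb,
    variance_sum_offDiag hX h4 hsym b hb, ha]
  have hd₀ : 0 ≤ ∑ i, a i i ^ 2 := Finset.sum_nonneg fun i _ => sq_nonneg (a i i)
  have hb₀ : 0 ≤ ∑ p, b p ^ 2 := Finset.sum_nonneg fun p _ => sq_nonneg (b p)
  nlinarith [mul_nonneg hM hd₀, mul_nonneg (Vfunc_nonneg (μ := μ) (X := X)) hb₀]

theorem statement7_general {Ω : Type*} [MeasurableSpace Ω] (μ : Measure Ω) [IsProbabilityMeasure μ]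
    {n : ℕ} (X : Ω → EuclideanSpace ℝ (Fin n)) (hX : Measurable X)
    (h4 : Integrable (fun ω => ‖X ω‖ ^ 4) μ)
    (hsym : CoordinatewiseSymmetric μ X) :
    Vfunc μ X ≤ corrConst μ X ∧
      corrConst μ X ≤ 2 * (⨆ i : Fin n, ∫ ω, (X ω i) ^ 4 ∂μ) + Vfunc μ X := by
  have hmem := two_mul_iSup_add_Vfunc_mem_corrSet hX h4 hsym
  exact ⟨le_csInf ⟨_, hmem⟩ fun _ => Vfunc_le_of_mem_corrSet,
    csInf_le ⟨0, fun _ hL => hL.1⟩ hmem⟩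

/-- If `X` has a coordinate-wise symmetric distribution and finite fourth
moments, then `V(X) ≤ Λ(X) ≤ 2 maxᵢ E Xᵢ⁴ + V(X)`. -/
theorem statement7 {Ω : Type*} [MeasurableSpace Ω] (μ : Measure Ω) [IsProbabilityMeasure μ]
    {n : ℕ} (hn : 1 ≤ n) (X : Ω → EuclideanSpace ℝ (Fin n)) (hX : Measurable X)
    (h4 : Integrable (fun ω => ‖X ω‖ ^ 4) μ)
    (hsym : CoordinatewiseSymmetric μ X) :
    Vfunc μ X ≤ corrConst μ X ∧
      corrConst μ X ≤ 2 * (⨆ i : Fin n, ∫ ω, (X ω i) ^ 4 ∂μ) + Vfunc μ X :=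
  statement7_general μ X hX h4 hsym
end
end

section
/- If a mean-zero random vector X in R^n satisfies the Poincaré-type inequality λ_1 Var(u(X)) ≤ E |∇u(X)|^2 for all smooth functions u : R^n → R with some constant λ_1 > 0, then M_2(X)^2 ≤ 1/λ_1 and σ_4^2(X) ≤ Λ(X) ≤ 4/λ_1^2. -/
open MeasureTheory ProbabilityTheory Real
open scoped RealInnerProductSpace ENNReal Pointwise

noncomputable section

variable {Ω : Type*} [MeasurableSpace Ω] {n : ℕ}

section Statement10Helpers
open Filter


def phiR (R t : ℝ) : ℝ := R * Real.arctan (t / R)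
def gR (R t : ℝ) : ℝ := 1 / (1 + (t / R) ^ 2)

lemma gR_pos (R t : ℝ) : 0 < gR R t := by
  have : (0:ℝ) < 1 + (t / R)^2 := by positivity
  exact div_pos one_pos this

lemma gR_le_one (R t : ℝ) : gR R t ≤ 1 := by
  rw [gR, div_le_one (by positivity)]
  nlinarith [sq_nonneg (t / R)]

lemma phiR_contDiff (R : ℝ) : ContDiff ℝ (⊤ : ℕ∞) (phiR R) :=
  (contDiff_const.mul (Real.contDiff_arctan.comp (contDiff_id.div_const R)))

lemma hasDerivAt_phiR {R : ℝ} (hR : R ≠ 0) (t : ℝ) : HasDerivAt (phiR R) (gR R t) t := by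
  have h1 : HasDerivAt (fun s : ℝ => s / R) (1 / R) t := (hasDerivAt_id t).div_const R
  have h2 := (Real.hasDerivAt_arctan (t / R)).comp t h1
  have h3 : HasDerivAt (phiR R) (R * (1 / (1 + (t / R) ^ 2) * (1 / R))) t := h2.const_mul R
  convert h3 using 1
  rw [gR]
  field_simp
lemma arctan_le_self {t : ℝ} (ht : 0 ≤ t) : Real.arctan t ≤ t := by
  have hmono : MonotoneOn (fun s : ℝ => s - Real.arctan s) (Set.Ici 0) := by
    apply monotoneOn_of_deriv_nonneg (convex_Ici 0)
    · exact (continuous_id.sub Real.continuous_arctan).continuousOn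
    · intro x _
      exact ((differentiable_id.sub Real.differentiable_arctan) x).differentiableWithinAt
    · intro x hx
      have : deriv (fun s : ℝ => s - Real.arctan s) x = 1 - 1 / (1 + x ^ 2) := by
        rw [deriv_fun_sub differentiableAt_fun_id (Real.differentiable_arctan x), deriv_id'', Real.deriv_arctan]
      rw [this]
      have h1 : 1 / (1 + x^2) ≤ 1 := by rw [div_le_one (by positivity)]; nlinarith [sq_nonneg x]
      linarith
  have := hmono (Set.self_mem_Ici) ht ht
  simpa [Real.arctan_zero] using this

lemma abs_arctan_le_self (t : ℝ) : |Real.arctan t| ≤ |t| := by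
  rcases le_total 0 t with h | h
  · rw [abs_of_nonneg h, abs_of_nonneg (by simpa using Real.arctan_strictMono.monotone h)]
    exact arctan_le_self h
  · rw [abs_of_nonpos h, abs_of_nonpos (by simpa using Real.arctan_strictMono.monotone h)]
    have := arctan_le_self (neg_nonneg.2 h)
    rw [Real.arctan_neg] at this
    linarith

lemma abs_phiR_le_abs {R : ℝ} (hR : 0 < R) (t : ℝ) : |phiR R t| ≤ |t| := by
  rw [phiR, abs_mul, abs_of_pos hR]
  calc R * |Real.arctan (t / R)| ≤ R * |t / R| := by
        exact mul_le_mul_of_nonneg_left (abs_arctan_le_self _) hR.le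
    _ = |t| := by rw [abs_div, abs_of_pos hR]; field_simp

lemma abs_phiR_le_const {R : ℝ} (hR : 0 < R) (t : ℝ) : |phiR R t| ≤ R * (π / 2) := by
  rw [phiR, abs_mul, abs_of_pos hR]
  apply mul_le_mul_of_nonneg_left _ hR.le
  rw [abs_le]
  exact ⟨(Real.neg_pi_div_two_lt_arctan _).le, (Real.arctan_lt_pi_div_two _).le⟩

lemma tendsto_phiR (t : ℝ) :
    Tendsto (fun k : ℕ => phiR (k + 1) t) atTop (nhds t) := by
  rcases eq_or_ne t 0 with rfl | ht
  · simpa [phiR] using tendsto_const_nhds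
  · have h0 : Tendsto (fun k : ℕ => t / (k + 1 : ℝ)) atTop (nhds 0) := by
      apply Tendsto.div_atTop tendsto_const_nhds
      exact tendsto_natCast_atTop_atTop.atTop_add tendsto_const_nhds
    have h0' : Tendsto (fun k : ℕ => t / (k + 1 : ℝ)) atTop (nhdsWithin (0:ℝ) {(0:ℝ)}ᶜ) := by
      apply tendsto_nhdsWithin_of_tendsto_nhds_of_eventually_within _ h0
      filter_upwards with k
      have : (0:ℝ) < (k:ℝ) + 1 := by positivity
      simp [div_ne_zero ht this.ne']
    have hslope : Tendsto (fun h : ℝ => Real.arctan h / h) (nhdsWithin (0:ℝ) {(0:ℝ)}ᶜ) (nhds 1) := by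
      have := hasDerivAt_iff_tendsto_slope.1 (Real.hasDerivAt_arctan 0)
      simp only [slope_fun_def, Real.arctan_zero, sub_zero, vsub_eq_sub] at this
      have h1 : (1 : ℝ) / (1 + 0 ^ 2) = 1 := by norm_num
      rw [h1] at this
      exact this.congr (fun h => by rw [smul_eq_mul, inv_mul_eq_div])
    have := hslope.comp h0'
    have heq : ∀ k : ℕ, phiR (k+1) t = t * (Real.arctan (t / (k+1)) / (t / (k+1))) := by
      intro k
      have hk : ((k:ℝ) + 1) ≠ 0 := by positivity
      rw [phiR]
      field_simp
    have hfin : Tendsto (fun k : ℕ => t * (Real.arctan (t / (k+1 : ℝ)) / (t / (k+1 : ℝ)))) atTop (nhds (t * 1)) :=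
      Tendsto.mul (tendsto_const_nhds) this
    rw [mul_one] at hfin
    exact hfin.congr (fun k => (heq k).symm)

variable {F : Type*} [NormedAddCommGroup F] [InnerProductSpace ℝ F] [CompleteSpace F]

lemma hasGradientAt_of_innerSL {f : F → ℝ} {v x : F}
    (h : HasFDerivAt f (innerSL ℝ v) x) : HasGradientAt f v x := by
  have heq : innerSL ℝ v = InnerProductSpace.toDual ℝ F v := by
    ext y; simp [InnerProductSpace.toDual_apply_apply]
  rw [hasGradientAt_iff_hasFDerivAt, ← heq]
  exact h

lemma hasGradientAt_inner_const (θ x : F) : HasGradientAt (fun y => ⟪θ, y⟫) θ x :=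
  hasGradientAt_of_innerSL ((innerSL ℝ θ).hasFDerivAt)

lemma hasGradientAt_phi_inner {R : ℝ} (hR : R ≠ 0) (θ x : F) :
    HasGradientAt (fun y => phiR R ⟪θ, y⟫) (gR R ⟪θ, x⟫ • θ) x := by
  apply hasGradientAt_of_innerSL
  have h1 : HasFDerivAt (fun y : F => phiR R ⟪θ, y⟫) (gR R ⟪θ, x⟫ • innerSL ℝ θ) x :=
    (hasDerivAt_phiR hR ⟪θ, x⟫).comp_hasFDerivAt x ((innerSL ℝ θ).hasFDerivAt)
  convert h1 using 1
  ext y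
  simp [real_inner_smul_left, mul_comm]

lemma contDiff_inner_const (θ : F) : ContDiff ℝ (⊤ : ℕ∞) (fun y : F => ⟪θ, y⟫) :=
  (innerSL ℝ θ).contDiff

lemma contDiff_phi_inner (R : ℝ) (θ : F) : ContDiff ℝ (⊤ : ℕ∞) (fun y : F => phiR R ⟪θ, y⟫) :=
  (phiR_contDiff R).comp (contDiff_inner_const θ)

lemma gR_continuous (R : ℝ) : Continuous (gR R) := by
  apply continuous_const.div (by continuity)
  intro t; positivity

lemma memL2_inner_of_poincare {Ω : Type*} [MeasurableSpace Ω] (μ : Measure Ω)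
    [IsProbabilityMeasure μ] {n : ℕ} (X : Ω → EuclideanSpace ℝ (Fin n)) (hX : Measurable X)
    (lam1 : ℝ) (hlam : 0 < lam1)
    (hPoin : ∀ u : EuclideanSpace ℝ (Fin n) → ℝ, ContDiff ℝ (⊤ : ℕ∞) u →
      Integrable (fun ω => ‖gradient u (X ω)‖ ^ 2) μ →
      lam1 * variance (fun ω => u (X ω)) μ ≤ ∫ ω, ‖gradient u (X ω)‖ ^ 2 ∂μ)
    (θ : EuclideanSpace ℝ (Fin n)) (hθ : ‖θ‖ = 1) :
    MemLp (fun ω => ⟪θ, X ω⟫) 2 μ := by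
  set Y : Ω → ℝ := fun ω => ⟪θ, X ω⟫ with hYdef
  have hYm : Measurable Y := ((innerSL ℝ θ).continuous.measurable.comp hX)
  set Z : ℕ → Ω → ℝ := fun k ω => phiR (k+1) (Y ω) with hZdef
  have hRpos : ∀ k : ℕ, (0:ℝ) < ((k:ℝ)+1) := fun k => by positivity
  have hZm : ∀ k, Measurable (Z k) :=
    fun k => ((phiR_contDiff _).continuous.measurable).comp hYm
  have hZb : ∀ k ω, ‖Z k ω‖ ≤ ((k:ℝ)+1) * (π/2) := fun k ω => by
    rw [Real.norm_eq_abs]; exact abs_phiR_le_const (hRpos k) _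
  have hZmem : ∀ k, MemLp (Z k) 2 μ := fun k =>
    MemLp.of_bound (hZm k).aestronglyMeasurable _ (ae_of_all _ (hZb k))
  have hvar : ∀ k, variance (Z k) μ ≤ 1 / lam1 := by
    intro k
    have hgr : ∀ x, HasGradientAt (fun y : EuclideanSpace ℝ (Fin n) => phiR ((k:ℝ)+1) ⟪θ, y⟫)
        (gR ((k:ℝ)+1) ⟪θ, x⟫ • θ) x := fun x => hasGradientAt_phi_inner (hRpos k).ne' θ x
    have hgeq : gradient (fun y : EuclideanSpace ℝ (Fin n) => phiR ((k:ℝ)+1) ⟪θ, y⟫)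
        = fun x => gR ((k:ℝ)+1) ⟪θ, x⟫ • θ := gradient_eq hgr
    have hnorm : ∀ ω, ‖gradient (fun y : EuclideanSpace ℝ (Fin n) => phiR ((k:ℝ)+1) ⟪θ, y⟫) (X ω)‖^2 ≤ 1 := by
      intro ω
      rw [hgeq]
      simp only [norm_smul, hθ, mul_one, Real.norm_eq_abs]
      have h1 := gR_le_one ((k:ℝ)+1) ⟪θ, X ω⟫
      have h2 := (gR_pos ((k:ℝ)+1) ⟪θ, X ω⟫).le
      rw [abs_of_nonneg h2]
      nlinarith
    have hintg : Integrable (fun ω => ‖gradient (fun y : EuclideanSpace ℝ (Fin n) => phiR ((k:ℝ)+1) ⟪θ, y⟫) (X ω)‖^2) μ := by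
      apply (integrable_const (1:ℝ)).mono'
      · rw [hgeq]
        apply Measurable.aestronglyMeasurable
        have hme : Measurable fun ω => gR ((k:ℝ)+1) (Y ω) := (gR_continuous _).measurable.comp hYm
        have : (fun ω => ‖gR ((k:ℝ)+1) ⟪θ, X ω⟫ • θ‖^2) = fun ω => ‖gR ((k:ℝ)+1) (Y ω)‖^2 * ‖θ‖^2 := by
          funext ω; rw [norm_smul, mul_pow]
        rw [this]
        exact (hme.norm.pow_const 2).mul_const _
      · filter_upwards with ω
        rw [Real.norm_eq_abs, abs_of_nonneg (by positivity)]
        exact hnorm ω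
    have h0 := hPoin _ (contDiff_phi_inner _ θ) hintg
    have hle : ∫ ω, ‖gradient (fun y : EuclideanSpace ℝ (Fin n) => phiR ((k:ℝ)+1) ⟪θ, y⟫) (X ω)‖^2 ∂μ ≤ 1 := by
      calc ∫ ω, ‖gradient (fun y : EuclideanSpace ℝ (Fin n) => phiR ((k:ℝ)+1) ⟪θ, y⟫) (X ω)‖^2 ∂μ
          ≤ ∫ _ω, (1:ℝ) ∂μ := integral_mono hintg (integrable_const 1) hnorm
        _ = 1 := by simp
    have hfin : lam1 * variance (Z k) μ ≤ 1 := le_trans h0 hle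
    rw [le_div_iff₀ hlam]
    linarith [hfin, mul_comm lam1 (variance (Z k) μ)]
  obtain ⟨K, hK⟩ : ∃ K : ℕ, (1:ℝ≥0∞)/2 < μ {ω | |Y ω| ≤ (K:ℝ)} := by
    have hdir : Directed (· ⊆ ·) (fun K : ℕ => {ω | |Y ω| ≤ (K:ℝ)}) := by
      apply Monotone.directed_le
      intro i j hij ω hω
      simp only [Set.mem_setOf_eq] at hω ⊢
      exact le_trans hω (by exact_mod_cast hij)
    have hU : (⋃ K : ℕ, {ω | |Y ω| ≤ (K:ℝ)}) = Set.univ :=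
      Set.eq_univ_of_forall (fun ω => Set.mem_iUnion.2 (exists_nat_ge |Y ω|))
    have h1 := Directed.measure_iUnion (μ := μ) hdir
    rw [hU, measure_univ] at h1
    have h2 : (1:ℝ≥0∞)/2 < ⨆ K : ℕ, μ {ω | |Y ω| ≤ (K:ℝ)} := by
      rw [← h1]
      exact ENNReal.half_lt_self one_ne_zero ENNReal.one_ne_top
    exact lt_iSup_iff.1 h2
  set tC : ℝ := Real.sqrt (2/lam1) + 1 with htCdef
  have htC : 0 < tC := by positivity
  have htC2 : 2/lam1 ≤ tC^2 := by
    nlinarith [Real.sq_sqrt (le_of_lt (div_pos two_pos hlam)), Real.sqrt_nonneg (2/lam1)]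
  have hvarnn : ∀ k, 0 ≤ variance (Z k) μ := fun k => variance_nonneg _ _
  have hmb : ∀ k, |μ[Z k]| ≤ (K:ℝ) + tC := by
    intro k
    by_contra hcon
    push_neg at hcon
    have hcheb := meas_ge_le_variance_div_sq (hZmem k) htC
    have hhalf : ENNReal.ofReal (variance (Z k) μ / tC^2) ≤ 1/2 := by
      have hr : variance (Z k) μ / tC^2 ≤ 1/2 := by
        rw [div_le_iff₀ (by positivity)]
        have h1 := hvar k
        have h4 : 2/lam1 = 2*(1/lam1) := by ring
        nlinarith
      calc ENNReal.ofReal (variance (Z k) μ / tC^2) ≤ ENNReal.ofReal (1/2) :=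
            ENNReal.ofReal_le_ofReal hr
        _ = 1/2 := by
            rw [ENNReal.ofReal_div_of_pos two_pos]
            norm_num
    have hsub : {ω | |Y ω| ≤ (K:ℝ)} ⊆ {ω | tC ≤ |Z k ω - μ[Z k]|} := by
      intro ω hω
      have h1 : |Z k ω| ≤ (K:ℝ) := le_trans (abs_phiR_le_abs (hRpos k) _) hω
      have h2 := abs_sub_abs_le_abs_sub (μ[Z k]) (Z k ω)
      have h3 : |μ[Z k] - Z k ω| = |Z k ω - μ[Z k]| := abs_sub_comm _ _
      simp only [Set.mem_setOf_eq]
      linarith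
    have : μ {ω | |Y ω| ≤ (K:ℝ)} ≤ 1/2 :=
      le_trans (measure_mono hsub) (le_trans hcheb hhalf)
    exact absurd (lt_of_lt_of_le hK this) (lt_irrefl _)
  have hfat : ∫⁻ ω, ENNReal.ofReal (Y ω^2) ∂μ ≤ ENNReal.ofReal (1/lam1 + ((K:ℝ)+tC)^2) := by
    have hpt : ∀ ω, Tendsto (fun k : ℕ => ENNReal.ofReal ((Z k ω)^2)) atTop
        (nhds (ENNReal.ofReal (Y ω^2))) := by
      intro ω
      exact (ENNReal.continuous_ofReal.tendsto _).comp ((tendsto_phiR (Y ω)).pow 2)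
    calc ∫⁻ ω, ENNReal.ofReal (Y ω^2) ∂μ
        = ∫⁻ ω, liminf (fun k : ℕ => ENNReal.ofReal ((Z k ω)^2)) atTop ∂μ := by
          apply lintegral_congr
          intro ω
          exact ((hpt ω).liminf_eq).symm
      _ ≤ liminf (fun k : ℕ => ∫⁻ ω, ENNReal.ofReal ((Z k ω)^2) ∂μ) atTop := by
          apply lintegral_liminf_le
          intro k
          exact ENNReal.measurable_ofReal.comp ((hZm k).pow_const 2)
      _ ≤ liminf (fun _ : ℕ => ENNReal.ofReal (1/lam1 + ((K:ℝ)+tC)^2)) atTop := by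
          refine liminf_le_liminf (Filter.Eventually.of_forall fun k => ?_)
          have hint2 : Integrable (fun ω => (Z k ω)^2) μ := (hZmem k).integrable_sq
          rw [← ofReal_integral_eq_lintegral_ofReal hint2 (ae_of_all _ fun ω => sq_nonneg _)]
          apply ENNReal.ofReal_le_ofReal
          have hv := variance_eq_sub (hZmem k)
          have hZsq : ∫ ω, (Z k ω)^2 ∂μ = μ[(Z k)^2] := by
            apply integral_congr_ae
            filter_upwards with ω
            simp [Pi.pow_apply]
          have hsum : ∫ ω, (Z k ω)^2 ∂μ = variance (Z k) μ + (μ[Z k])^2 := by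
            rw [hZsq, hv]; ring
          rw [hsum]
          have h1 := hvar k
          have h2 : (μ[Z k])^2 ≤ ((K:ℝ)+tC)^2 :=
            sq_le_sq' (by linarith [(abs_le.1 (hmb k)).1]) ((abs_le.1 (hmb k)).2)
          exact add_le_add h1 h2
      _ = ENNReal.ofReal (1/lam1 + ((K:ℝ)+tC)^2) := liminf_const _
  have hint : Integrable (fun ω => Y ω^2) μ := by
    refine ⟨(hYm.pow_const 2).aestronglyMeasurable, ?_⟩
    rw [hasFiniteIntegral_iff_ofReal (ae_of_all _ fun ω => sq_nonneg _)]
    exact lt_of_le_of_lt hfat ENNReal.ofReal_lt_top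
  exact (memLp_two_iff_integrable_sq hYm.aestronglyMeasurable).2 hint


end Statement10Helpers

/-- If a mean-zero random vector `X` in `ℝⁿ` satisfies the Poincaré-type
inequality `λ₁ Var(u(X)) ≤ E|∇u(X)|²` for all smooth `u` with some `λ₁ > 0`, then
`M₂(X)² ≤ 1/λ₁` and `σ₄²(X) ≤ Λ(X) ≤ 4/λ₁²`. -/
theorem statement10 {Ω : Type*} [MeasurableSpace Ω] (μ : Measure Ω) [IsProbabilityMeasure μ]
    {n : ℕ} (X : Ω → EuclideanSpace ℝ (Fin n)) (hX : Measurable X)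
    (hmean : ∀ i, ∫ ω, X ω i ∂μ = 0)
    (lam1 : ℝ) (hlam : 0 < lam1)
    (hPoin : ∀ u : EuclideanSpace ℝ (Fin n) → ℝ, ContDiff ℝ (⊤ : ℕ∞) u →
      Integrable (fun ω => ‖gradient u (X ω)‖ ^ 2) μ →
      lam1 * variance (fun ω => u (X ω)) μ ≤ ∫ ω, ‖gradient u (X ω)‖ ^ 2 ∂μ) :
    (⨆ θ : Metric.sphere (0 : EuclideanSpace ℝ (Fin n)) 1,
        ∫ ω, ⟪(θ : EuclideanSpace ℝ (Fin n)), X ω⟫ ^ 2 ∂μ) ≤ 1 / lam1 ∧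
    sigma4sq μ X ≤ corrConst μ X ∧
    corrConst μ X ≤ 4 / lam1 ^ 2 := by
  have hlam' : (0:ℝ) ≤ 1 / lam1 := by positivity
  -- Step B : variance bound for unit vectors
  have hvarY : ∀ θ : EuclideanSpace ℝ (Fin n), ‖θ‖ = 1 →
      lam1 * variance (fun ω => ⟪θ, X ω⟫) μ ≤ 1 := by
    intro θ hθ
    have hgeq : gradient (fun y : EuclideanSpace ℝ (Fin n) => ⟪θ, y⟫) = fun _ => θ :=
      gradient_eq (fun x => hasGradientAt_inner_const θ x)
    have hintg : Integrable
        (fun ω => ‖gradient (fun y : EuclideanSpace ℝ (Fin n) => ⟪θ, y⟫) (X ω)‖^2) μ := by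
      rw [hgeq]
      exact integrable_const _
    have h0 := hPoin _ (contDiff_inner_const θ) hintg
    have hone : ∫ ω, ‖gradient (fun y : EuclideanSpace ℝ (Fin n) => ⟪θ, y⟫) (X ω)‖^2 ∂μ = 1 := by
      rw [hgeq]
      simp [hθ]
    exact le_trans h0 (le_of_eq hone)
  have memL2 : ∀ θ : EuclideanSpace ℝ (Fin n), ‖θ‖ = 1 → MemLp (fun ω => ⟪θ, X ω⟫) 2 μ :=
    fun θ hθ => memL2_inner_of_poincare μ X hX lam1 hlam hPoin θ hθ
  -- coordinates
  have hcoord : ∀ i, MemLp (fun ω => X ω i) 2 μ := by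
    intro i
    have h1 := memL2 (EuclideanSpace.single i (1:ℝ)) (by simp [EuclideanSpace.norm_single])
    have h2 : (fun ω => ⟪EuclideanSpace.single i (1:ℝ), X ω⟫) = fun ω => X ω i := by
      funext ω
      rw [EuclideanSpace.inner_single_left]
      simp
    rwa [h2] at h1
  have hcoordint : ∀ i, Integrable (fun ω => X ω i) μ :=
    fun i => (hcoord i).integrable one_le_two
  -- arbitrary v : MemLp
  have hvL2 : ∀ v : EuclideanSpace ℝ (Fin n), MemLp (fun ω => ⟪v, X ω⟫) 2 μ := by
    intro v
    by_cases hv : v = 0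
    · have h3 : (fun ω => ⟪v, X ω⟫) = fun _ => (0:ℝ) := by
        funext ω; rw [hv]; simp
      rw [h3]
      exact memLp_const 0
    · have hnorm : ‖(‖v‖⁻¹ • v)‖ = 1 := norm_smul_inv_norm hv
      have h2 := (memL2 _ hnorm).const_mul ‖v‖
      have h3 : (fun ω => ‖v‖ * ⟪‖v‖⁻¹ • v, X ω⟫) = fun ω => ⟪v, X ω⟫ := by
        funext ω
        rw [real_inner_smul_left, ← mul_assoc, mul_inv_cancel₀ (norm_ne_zero_iff.2 hv), one_mul]
      rwa [h3] at h2
  -- mean zero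
  have hmean' : ∀ v : EuclideanSpace ℝ (Fin n), ∫ ω, ⟪v, X ω⟫ ∂μ = 0 := by
    intro v
    have h1 : (fun ω => ⟪v, X ω⟫) = fun ω => ∑ i, v i * X ω i := by
      funext ω
      rw [PiLp.inner_apply]
      simp [RCLike.inner_apply, conj_trivial]
      exact Finset.sum_congr rfl fun i _ => mul_comm _ _
    rw [h1, integral_finset_sum]
    · apply Finset.sum_eq_zero
      intro i _
      rw [integral_const_mul, hmean i, mul_zero]
    · exact fun i _ => (hcoordint i).const_mul _
  -- second moment bound
  have hM2 : ∀ v : EuclideanSpace ℝ (Fin n), ∫ ω, ⟪v, X ω⟫^2 ∂μ ≤ ‖v‖^2 / lam1 := by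
    intro v
    by_cases hv : v = 0
    · have h3 : (fun ω => ⟪v, X ω⟫^2) = fun _ => (0:ℝ) := by
        funext ω; rw [hv]; simp
      rw [h3]
      simp only [integral_zero]
      positivity
    · set θ := ‖v‖⁻¹ • v with hθdef
      have hnorm : ‖θ‖ = 1 := norm_smul_inv_norm hv
      have hmem := memL2 θ hnorm
      have h2 := hvarY θ hnorm
      rw [variance_eq_sub hmem] at h2
      have hzero : (∫ ω, ⟪θ, X ω⟫ ∂μ) = 0 := hmean' θ
      simp only [Pi.pow_apply] at h2
      rw [hzero] at h2
      simp only [ne_eq, OfNat.ofNat_ne_zero, not_false_eq_true, zero_pow, sub_zero] at h2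
      have hsq : ∀ x : EuclideanSpace ℝ (Fin n), ⟪v, x⟫^2 = ‖v‖^2 * ⟪θ, x⟫^2 := by
        intro x
        rw [hθdef, real_inner_smul_left]
        have : ‖v‖ ≠ 0 := norm_ne_zero_iff.2 hv
        field_simp
      calc ∫ ω, ⟪v, X ω⟫^2 ∂μ = ‖v‖^2 * ∫ ω, ⟪θ, X ω⟫^2 ∂μ := by
            rw [show (fun ω => ⟪v, X ω⟫^2) = fun ω => ‖v‖^2 * ⟪θ, X ω⟫^2 from
              funext fun ω => hsq (X ω), integral_const_mul]
        _ ≤ ‖v‖^2 * (1/lam1) := by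
            apply mul_le_mul_of_nonneg_left _ (by positivity)
            rw [le_div_iff₀ hlam]
            calc (∫ ω, ⟪θ, X ω⟫^2 ∂μ) * lam1 = lam1 * ∫ ω, ⟪θ, X ω⟫^2 ∂μ := mul_comm _ _
              _ ≤ 1 := h2
        _ = ‖v‖^2/lam1 := by ring
    -- Part 1
  have part1 : (⨆ θ : Metric.sphere (0 : EuclideanSpace ℝ (Fin n)) 1,
      ∫ ω, ⟪(θ : EuclideanSpace ℝ (Fin n)), X ω⟫ ^ 2 ∂μ) ≤ 1 / lam1 := by
    apply Real.iSup_le _ hlam'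
    intro θ
    have hθ : ‖(θ : EuclideanSpace ℝ (Fin n))‖ = 1 := by
      have h := θ.2
      rwa [mem_sphere_zero_iff_norm] at h
    have h := hM2 (θ : EuclideanSpace ℝ (Fin n))
    rwa [hθ, one_pow] at h
  -- quadratic membership
  have hquad : (4/lam1^2) ∈ corrSet μ X := by
    constructor
    · positivity
    intro a
    set e : Fin n → EuclideanSpace ℝ (Fin n) := fun i => EuclideanSpace.single i (1:ℝ) with hedef
    have hip : ∀ (i : Fin n) (x : EuclideanSpace ℝ (Fin n)), ⟪e i, x⟫ = x i := by
      intro i x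
      rw [hedef]
      rw [EuclideanSpace.inner_single_left]
      simp
    have horth : ∀ i j, ⟪e i, e j⟫ = if i = j then (1:ℝ) else 0 := by
      intro i j
      rw [hip i (e j), hedef]
      simp [EuclideanSpace.single_apply]
    set B : Fin n → EuclideanSpace ℝ (Fin n) := fun i => ∑ j, (a i j + a j i) • e j with hBdef
    have hBip : ∀ (i : Fin n) (x : EuclideanSpace ℝ (Fin n)), ⟪B i, x⟫ = ∑ j, (a i j + a j i) * x j := by
      intro i x
      rw [hBdef]
      rw [sum_inner]
      refine Finset.sum_congr rfl fun j _ => ?_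
      rw [real_inner_smul_left, hip]
    have hinner_eB : ∀ i j, ⟪e j, B i⟫ = a i j + a j i := by
      intro i j
      rw [real_inner_comm, hBip]
      rw [Finset.sum_eq_single j]
      · simp [hedef, EuclideanSpace.single_apply]
      · intro b _ hb
        simp [hedef, EuclideanSpace.single_apply, hb]
      · intro h; exact absurd (Finset.mem_univ j) h
    have hBnorm : ∀ i, ‖B i‖^2 = ∑ j, (a i j + a j i)^2 := by
      intro i
      rw [← real_inner_self_eq_norm_sq]
      calc ⟪B i, B i⟫ = ∑ j, (a i j + a j i) * ⟪e j, B i⟫ := by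
            conv_lhs => rw [hBdef]
            rw [sum_inner]
            exact Finset.sum_congr rfl fun j _ => by rw [real_inner_smul_left]
        _ = ∑ j, (a i j + a j i)^2 := by
            refine Finset.sum_congr rfl fun j _ => ?_
            rw [hinner_eB]; ring
    set u : EuclideanSpace ℝ (Fin n) → ℝ := fun x => ∑ i, ∑ j, a i j * (x i * x j) with hudef
    have hueq : u = fun x => ∑ i, ∑ j, a i j * (⟪e i, x⟫ * ⟪e j, x⟫) := by
      funext x
      rw [hudef]
      simp only [hip]
    set w : EuclideanSpace ℝ (Fin n) → EuclideanSpace ℝ (Fin n) :=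
      fun x => ∑ i, ⟪B i, x⟫ • e i with hwdef
    have hinner_we : ∀ (x : EuclideanSpace ℝ (Fin n)) (i : Fin n), ⟪e i, w x⟫ = ⟪B i, x⟫ := by
      intro x i
      rw [hwdef]
      simp only
      rw [inner_sum]
      rw [Finset.sum_eq_single i]
      · rw [real_inner_smul_right, horth]; simp
      · intro b _ hb
        rw [real_inner_smul_right, horth]
        simp [Ne.symm hb]
      · intro h; exact absurd (Finset.mem_univ i) h
    have hwnorm : ∀ x : EuclideanSpace ℝ (Fin n), ‖w x‖^2 = ∑ i, ⟪B i, x⟫^2 := by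
      intro x
      rw [← real_inner_self_eq_norm_sq]
      calc ⟪w x, w x⟫ = ∑ i, ⟪B i, x⟫ * ⟪e i, w x⟫ := by
            conv_lhs => rw [hwdef]
            rw [sum_inner]
            exact Finset.sum_congr rfl fun i _ => by rw [real_inner_smul_left]
        _ = ∑ i, ⟪B i, x⟫^2 := by
            refine Finset.sum_congr rfl fun i _ => ?_
            rw [hinner_we]; ring
    -- gradient
    have hgr : ∀ x, HasGradientAt u (w x) x := by
      intro x
      apply hasGradientAt_of_innerSL
      have hterm : ∀ i j : Fin n, HasFDerivAt (fun y : EuclideanSpace ℝ (Fin n) => a i j * (⟪e i, y⟫ * ⟪e j, y⟫))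
          ((a i j) • (⟪e i, x⟫ • innerSL ℝ (e j) + ⟪e j, x⟫ • innerSL ℝ (e i))) x := by
        intro i j
        exact (((innerSL ℝ (e i)).hasFDerivAt.mul (innerSL ℝ (e j)).hasFDerivAt).const_mul (a i j))
      have hsumder : HasFDerivAt u
          (∑ i, ∑ j, (a i j) • (⟪e i, x⟫ • innerSL ℝ (e j) + ⟪e j, x⟫ • innerSL ℝ (e i))) x := by
        rw [hueq]
        exact HasFDerivAt.fun_sum (fun i _ => HasFDerivAt.fun_sum (fun j _ => hterm i j))
      refine hsumder.congr_fderiv ?_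
      symm
      refine ContinuousLinearMap.ext fun y => ?_
      simp only [innerSL_apply_apply, ContinuousLinearMap.coe_sum', Finset.sum_apply,
        ContinuousLinearMap.add_apply, ContinuousLinearMap.smul_apply, smul_eq_mul]
      calc ⟪w x, y⟫ = ∑ i, ⟪B i, x⟫ * ⟪e i, y⟫ := by
            conv_lhs => rw [hwdef]
            rw [sum_inner]
            exact Finset.sum_congr rfl fun i _ => by rw [real_inner_smul_left]
        _ = ∑ i, ∑ j, a i j * (⟪e i, x⟫ * ⟪e j, y⟫ + ⟪e j, x⟫ * ⟪e i, y⟫) := by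
            have h1 : ∑ i, ∑ j, a i j * (⟪e i, x⟫ * ⟪e j, y⟫ + ⟪e j, x⟫ * ⟪e i, y⟫)
                = (∑ i, ∑ j, a i j * ⟪e i, x⟫ * ⟪e j, y⟫) + ∑ i, ∑ j, a i j * ⟪e j, x⟫ * ⟪e i, y⟫ := by
              rw [← Finset.sum_add_distrib]
              refine Finset.sum_congr rfl fun i _ => ?_
              rw [← Finset.sum_add_distrib]
              exact Finset.sum_congr rfl fun j _ => by ring
            have h2 : (∑ i, ∑ j, a i j * ⟪e i, x⟫ * ⟪e j, y⟫)
                = ∑ i, ∑ j, a j i * ⟪e j, x⟫ * ⟪e i, y⟫ := Finset.sum_comm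
            rw [h1, h2, ← Finset.sum_add_distrib]
            refine Finset.sum_congr rfl fun i _ => ?_
            rw [hBip]
            rw [Finset.sum_mul, ← Finset.sum_add_distrib]
            refine Finset.sum_congr rfl fun j _ => ?_
            simp only [hip]
            ring
    have hgeq : gradient u = w := gradient_eq hgr
    -- smoothness
    have hucd : ContDiff ℝ (⊤ : ℕ∞) u := by
      rw [hueq]
      apply ContDiff.sum
      intro i _
      apply ContDiff.sum
      intro j _
      exact contDiff_const.mul ((contDiff_inner_const (e i)).mul (contDiff_inner_const (e j)))
    -- integrability of gradient norm
    have hintsq : ∀ i, Integrable (fun ω => ⟪B i, X ω⟫^2) μ := fun i => (hvL2 (B i)).integrable_sq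
    have hwfun : (fun ω => ‖gradient u (X ω)‖^2) = fun ω => ∑ i, ⟪B i, X ω⟫^2 := by
      funext ω
      rw [hgeq, hwnorm]
    have hgradint : Integrable (fun ω => ‖gradient u (X ω)‖^2) μ := by
      rw [hwfun]
      exact integrable_finset_sum _ (fun i _ => hintsq i)
    have h0 := hPoin u hucd hgradint
    -- bound the energy
    have hbound : ∫ ω, ‖gradient u (X ω)‖^2 ∂μ ≤ (4 * ∑ i, ∑ j, (a i j)^2) / lam1 := by
      rw [hwfun, integral_finset_sum _ (fun i _ => hintsq i)]
      have hstep : ∀ i : Fin n, ∫ ω, ⟪B i, X ω⟫^2 ∂μ ≤ (∑ j, (a i j + a j i)^2) / lam1 := by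
        intro i
        have h := hM2 (B i)
        rwa [hBnorm] at h
      calc (∑ i, ∫ ω, ⟪B i, X ω⟫^2 ∂μ) ≤ ∑ i, (∑ j, (a i j + a j i)^2) / lam1 :=
            Finset.sum_le_sum (fun i _ => hstep i)
        _ = (∑ i, ∑ j, (a i j + a j i)^2) / lam1 := by rw [Finset.sum_div]
        _ ≤ (4 * ∑ i, ∑ j, (a i j)^2) / lam1 := by
            have hswap : (∑ i, ∑ j, (a j i)^2) = ∑ i, ∑ j, (a i j)^2 := Finset.sum_comm
            have h1 : (∑ i, ∑ j, (a i j + a j i)^2) ≤ ∑ i, ∑ j, (2*(a i j)^2 + 2*(a j i)^2) :=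
              Finset.sum_le_sum fun i _ => Finset.sum_le_sum fun j _ => by
                nlinarith [sq_nonneg (a i j - a j i)]
            have h2 : (∑ i, ∑ j, (2*(a i j)^2 + 2*(a j i)^2))
                = (∑ i, ∑ j, 2*(a i j)^2) + ∑ i, ∑ j, 2*(a j i)^2 := by
              simp only [Finset.sum_add_distrib]
            have h3 : (∑ i, ∑ j, 2*(a i j)^2) = 2 * ∑ i, ∑ j, (a i j)^2 := by
              simp only [← Finset.mul_sum]
            have h4 : (∑ i, ∑ j, 2*(a j i)^2) = 2 * ∑ i, ∑ j, (a j i)^2 := by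
              simp only [← Finset.mul_sum]
            have hs : (∑ i, ∑ j, (a i j + a j i)^2) ≤ 4 * ∑ i, ∑ j, (a i j)^2 := by
              rw [h2, h3, h4, hswap] at h1
              linarith
            exact (div_le_div_iff_of_pos_right hlam).2 hs
    -- conclude membership inequality
    have hveq : (fun ω => ∑ i, ∑ j, a i j * (X ω i * X ω j)) = fun ω => u (X ω) := by
      funext ω
      rw [hudef]
    rw [hveq]
    have hfin := le_trans h0 hbound
    rw [show (4:ℝ)/lam1^2 * ∑ i, ∑ j, (a i j)^2 = ((4 * ∑ i, ∑ j, (a i j)^2)/lam1)/lam1 from by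
      rw [div_div, div_mul_eq_mul_div, sq]]
    rw [le_div_iff₀ hlam]
    linarith [mul_comm (variance (fun ω => u (X ω)) μ) lam1]
  -- assemble
  have hbdd : BddBelow (corrSet μ X) := ⟨0, fun L hL => hL.1⟩
  have hne : (corrSet μ X).Nonempty := ⟨_, hquad⟩
  refine ⟨part1, ?_, csInf_le hbdd hquad⟩
  show sigma4sq μ X ≤ sInf (corrSet μ X)
  apply le_csInf hne
  rintro L ⟨hL0, hL⟩
  have h := hL (fun i j => if i = j then (1:ℝ) else 0)
  have hfun : (fun ω => ∑ i, ∑ j, (if i = j then (1:ℝ) else 0) * (X ω i * X ω j))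
      = fun ω => ‖X ω‖^2 := by
    funext ω
    have hnormx : ‖X ω‖^2 = ∑ i, X ω i * X ω i := by
      rw [EuclideanSpace.norm_eq, Real.sq_sqrt (by positivity)]
      refine Finset.sum_congr rfl fun i _ => ?_
      rw [Real.norm_eq_abs, sq_abs, sq]
    rw [hnormx]
    refine Finset.sum_congr rfl fun i _ => ?_
    rw [Finset.sum_eq_single i]
    · simp
    · intro b _ hb
      simp only [if_neg (Ne.symm hb), zero_mul]
    · intro hI
      exact absurd (Finset.mem_univ i) hI
  rw [hfun] at h
  have hsum1 : (∑ i : Fin n, ∑ j : Fin n, ((if i = j then (1:ℝ) else 0))^2) = n := by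
    have : ∀ i : Fin n, (∑ j : Fin n, ((if i = j then (1:ℝ) else 0))^2) = 1 := by
      intro i
      rw [Finset.sum_eq_single i]
      · simp
      · intro b _ hb
        simp only [if_neg (Ne.symm hb), ne_eq, OfNat.ofNat_ne_zero, not_false_eq_true, zero_pow]
      · intro hI
        exact absurd (Finset.mem_univ i) hI
    rw [Finset.sum_congr rfl fun i _ => this i]
    simp
  rw [hsum1] at h
  show (1/(n:ℝ)) * variance (fun ω => ‖X ω‖^2) μ ≤ L
  rcases Nat.eq_zero_or_pos n with hn | hn
  · subst hn
    simp only [Nat.cast_zero, div_zero, zero_mul]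
    exact hL0
  · have hn' : (0:ℝ) < n := by exact_mod_cast hn
    rw [div_mul_eq_mul_div, one_mul, div_le_iff₀ hn']
    exact h
end
end

section
/- If an isotropic random vector X in R^n satisfies the Poincaré-type inequality λ_1 Var(u(X)) ≤ E |∇u(X)|^2 for all smooth functions u : R^n → R with some constant λ_1 > 0, then σ_4^2(X) ≤ Λ(X) ≤ 4/λ_1. -/
open MeasureTheory ProbabilityTheory Real
open scoped RealInnerProductSpace ENNReal Pointwise

noncomputable section

variable {Ω : Type*} [MeasurableSpace Ω] {n : ℕ}

lemma hasFDerivAt_quad (a : Fin n → Fin n → ℝ) (x : EuclideanSpace ℝ (Fin n)) :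
    HasFDerivAt (fun y : EuclideanSpace ℝ (Fin n) => ∑ i, ∑ j, a i j * (y i * y j))
      (∑ i, ∑ j, a i j • ((x i) • (EuclideanSpace.proj j : EuclideanSpace ℝ (Fin n) →L[ℝ] ℝ)
        + (x j) • (EuclideanSpace.proj i : EuclideanSpace ℝ (Fin n) →L[ℝ] ℝ))) x := by
  have : ∀ i j : Fin n, HasFDerivAt (fun y : EuclideanSpace ℝ (Fin n) => a i j * (y i * y j))
      (a i j • ((x i) • (EuclideanSpace.proj j : EuclideanSpace ℝ (Fin n) →L[ℝ] ℝ)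
        + (x j) • (EuclideanSpace.proj i : EuclideanSpace ℝ (Fin n) →L[ℝ] ℝ))) x := by
    intro i j
    have h1 : HasFDerivAt (fun y : EuclideanSpace ℝ (Fin n) => y i)
        (EuclideanSpace.proj i : EuclideanSpace ℝ (Fin n) →L[ℝ] ℝ) x :=
      (EuclideanSpace.proj (𝕜 := ℝ) (ι := Fin n) i).hasFDerivAt
    have h2 : HasFDerivAt (fun y : EuclideanSpace ℝ (Fin n) => y j)
        (EuclideanSpace.proj j : EuclideanSpace ℝ (Fin n) →L[ℝ] ℝ) x :=
      (EuclideanSpace.proj (𝕜 := ℝ) (ι := Fin n) j).hasFDerivAt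
    exact (h1.mul h2).const_mul (a i j)
  exact HasFDerivAt.fun_sum (fun i _ => HasFDerivAt.fun_sum (fun j _ => this i j))

lemma gradient_quad (a : Fin n → Fin n → ℝ) (x : EuclideanSpace ℝ (Fin n)) (k : Fin n) :
    gradient (fun y : EuclideanSpace ℝ (Fin n) => ∑ i, ∑ j, a i j * (y i * y j)) x k
      = ∑ j, (a k j + a j k) * x j := by
  set D := (∑ i, ∑ j, a i j • ((x i) • (EuclideanSpace.proj j : EuclideanSpace ℝ (Fin n) →L[ℝ] ℝ)
        + (x j) • (EuclideanSpace.proj i : EuclideanSpace ℝ (Fin n) →L[ℝ] ℝ))) with hD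
  have hgrad : gradient (fun y : EuclideanSpace ℝ (Fin n) => ∑ i, ∑ j, a i j * (y i * y j)) x
      = (InnerProductSpace.toDual ℝ _).symm D := ((hasFDerivAt_quad a x).hasGradientAt).gradient
  rw [hgrad]
  have h1 : ((InnerProductSpace.toDual ℝ (EuclideanSpace ℝ (Fin n))).symm D) k
      = ⟪(InnerProductSpace.toDual ℝ (EuclideanSpace ℝ (Fin n))).symm D, EuclideanSpace.single k (1:ℝ)⟫ := by
    rw [EuclideanSpace.inner_single_right]; simp
  rw [h1, InnerProductSpace.toDual_symm_apply]
  simp only [hD, ContinuousLinearMap.coe_sum', Finset.sum_apply, ContinuousLinearMap.add_apply,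
    ContinuousLinearMap.coe_smul', Pi.smul_apply, PiLp.proj_apply,
    EuclideanSpace.single_apply, smul_eq_mul]
  rw [Finset.sum_comm]
  simp only [mul_add, Finset.sum_add_distrib, mul_ite, mul_one, mul_zero,
    Finset.sum_ite_eq', Finset.sum_ite_eq, Finset.mem_univ, if_true]
  simp only [Finset.sum_ite_irrel, Finset.sum_const_zero, Finset.sum_ite_eq',
    Finset.mem_univ, if_true]
  rw [← Finset.sum_add_distrib]
  exact Finset.sum_congr rfl fun j _ => by ring

lemma contDiff_quad (a : Fin n → Fin n → ℝ) :
    ContDiff ℝ (⊤ : ℕ∞) (fun y : EuclideanSpace ℝ (Fin n) => ∑ i, ∑ j, a i j * (y i * y j)) := by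
  apply ContDiff.sum; intro i _
  apply ContDiff.sum; intro j _
  have hi : ContDiff ℝ (⊤ : ℕ∞) (fun y : EuclideanSpace ℝ (Fin n) => y i) :=
    (EuclideanSpace.proj (𝕜 := ℝ) (ι := Fin n) i).contDiff
  have hj : ContDiff ℝ (⊤ : ℕ∞) (fun y : EuclideanSpace ℝ (Fin n) => y j) :=
    (EuclideanSpace.proj (𝕜 := ℝ) (ι := Fin n) j).contDiff
  exact contDiff_const.mul (hi.mul hj)

lemma meas_coord (X : Ω → EuclideanSpace ℝ (Fin n)) (hX : Measurable X) (i : Fin n) :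
    Measurable (fun ω => X ω i) := (measurable_pi_apply i).comp ((WithLp.measurable_ofLp _ _).comp hX)

lemma integrable_sq' (μ : Measure Ω) (X : Ω → EuclideanSpace ℝ (Fin n))
    (hcov : ∀ i j, ∫ ω, X ω i * X ω j ∂μ = if i = j then (1 : ℝ) else 0) (i : Fin n) :
    Integrable (fun ω => X ω i * X ω i) μ := by
  by_contra h
  have h2 := hcov i i
  simp [integral_undef h] at h2

lemma integrable_mul' (μ : Measure Ω) (X : Ω → EuclideanSpace ℝ (Fin n)) (hX : Measurable X)
    (hcov : ∀ i j, ∫ ω, X ω i * X ω j ∂μ = if i = j then (1 : ℝ) else 0) (i j : Fin n) :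
    Integrable (fun ω => X ω i * X ω j) μ := by
  have hg : Integrable (fun ω => X ω i * X ω i + X ω j * X ω j) μ :=
    (integrable_sq' μ X hcov i).add (integrable_sq' μ X hcov j)
  refine hg.mono ?_ ?_
  · exact ((meas_coord X hX i).mul (meas_coord X hX j)).aestronglyMeasurable
  · refine Filter.Eventually.of_forall fun ω => ?_
    simp only [norm_mul, Real.norm_eq_abs]
    have h1 := abs_nonneg (X ω i)
    have h2 := abs_nonneg (X ω j)
    have habs : |X ω i * X ω i + X ω j * X ω j| = X ω i * X ω i + X ω j * X ω j := by
      rw [abs_of_nonneg]; nlinarith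
    rw [habs]
    nlinarith [sq_abs (X ω i), sq_abs (X ω j), sq_nonneg (|X ω i| - |X ω j|)]

/-- If an isotropic random vector `X` in `ℝⁿ` satisfies the Poincaré-type
inequality `λ₁ Var(u(X)) ≤ E|∇u(X)|²` for all smooth `u` with some `λ₁ > 0`, then
`σ₄²(X) ≤ Λ(X) ≤ 4/λ₁`. -/
theorem statement11 {Ω : Type*} [MeasurableSpace Ω] (μ : Measure Ω) [IsProbabilityMeasure μ]
    {n : ℕ} (X : Ω → EuclideanSpace ℝ (Fin n)) (hX : Measurable X)
    (hiso : IsIsotropic μ X)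
    (lam1 : ℝ) (hlam : 0 < lam1)
    (hPoin : ∀ u : EuclideanSpace ℝ (Fin n) → ℝ, ContDiff ℝ (⊤ : ℕ∞) u →
      Integrable (fun ω => ‖gradient u (X ω)‖ ^ 2) μ →
      lam1 * variance (fun ω => u (X ω)) μ ≤ ∫ ω, ‖gradient u (X ω)‖ ^ 2 ∂μ) :
    sigma4sq μ X ≤ corrConst μ X ∧ corrConst μ X ≤ 4 / lam1 := by
  obtain ⟨hmean, hcov⟩ := hiso
  have hnormsq : ∀ x : EuclideanSpace ℝ (Fin n), ‖x‖ ^ 2 = ∑ i, x i ^ 2 := fun x => by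
    rw [EuclideanSpace.norm_eq, Real.sq_sqrt (Finset.sum_nonneg fun i _ => sq_nonneg _)]
    simp [sq_abs]
  have key : ∀ a : Fin n → Fin n → ℝ,
      variance (fun ω => ∑ i, ∑ j, a i j * (X ω i * X ω j)) μ
        ≤ (4 / lam1) * ∑ i, ∑ j, (a i j) ^ 2 := by
    intro a
    have hgradnorm : ∀ y : EuclideanSpace ℝ (Fin n),
        ‖gradient (fun y : EuclideanSpace ℝ (Fin n) => ∑ i, ∑ j, a i j * (y i * y j)) y‖ ^ 2
          = ∑ k, ∑ j, ∑ j', ((a k j + a j k) * (a k j' + a j' k)) * (y j * y j') := by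
      intro y
      rw [hnormsq]
      refine Finset.sum_congr rfl fun k _ => ?_
      rw [gradient_quad a y k, sq, Finset.sum_mul_sum]
      exact Finset.sum_congr rfl fun j _ => Finset.sum_congr rfl fun j' _ => by ring
    have hint1 : ∀ (k j j' : Fin n),
        Integrable (fun ω => ((a k j + a j k) * (a k j' + a j' k)) * (X ω j * X ω j')) μ :=
      fun k j j' => (integrable_mul' μ X hX hcov j j').const_mul _
    have hfun : (fun ω => ‖gradient (fun y : EuclideanSpace ℝ (Fin n) =>
          ∑ i, ∑ j, a i j * (y i * y j)) (X ω)‖ ^ 2)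
        = fun ω => ∑ k, ∑ j, ∑ j', ((a k j + a j k) * (a k j' + a j' k)) * (X ω j * X ω j') :=
      funext fun ω => hgradnorm (X ω)
    have hint : Integrable (fun ω => ‖gradient (fun y : EuclideanSpace ℝ (Fin n) =>
        ∑ i, ∑ j, a i j * (y i * y j)) (X ω)‖ ^ 2) μ := by
      rw [hfun]
      exact integrable_finset_sum _ fun k _ => integrable_finset_sum _ fun j _ =>
        integrable_finset_sum _ fun j' _ => hint1 k j j'
    have hintegral : ∫ ω, ‖gradient (fun y : EuclideanSpace ℝ (Fin n) =>
        ∑ i, ∑ j, a i j * (y i * y j)) (X ω)‖ ^ 2 ∂μ = ∑ k, ∑ j, ((a k j + a j k)) ^ 2 := by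
      rw [hfun]
      rw [integral_finset_sum _ (fun k _ => integrable_finset_sum _ fun j _ =>
        integrable_finset_sum _ fun j' _ => hint1 k j j')]
      refine Finset.sum_congr rfl fun k _ => ?_
      rw [integral_finset_sum _ (fun j _ => integrable_finset_sum _ fun j' _ => hint1 k j j')]
      refine Finset.sum_congr rfl fun j _ => ?_
      rw [integral_finset_sum _ (fun j' _ => hint1 k j j')]
      have heach : ∀ j' : Fin n, ∫ ω, ((a k j + a j k) * (a k j' + a j' k)) * (X ω j * X ω j') ∂μ
          = ((a k j + a j k) * (a k j' + a j' k)) * (if j = j' then (1:ℝ) else 0) := fun j' => by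
        rw [MeasureTheory.integral_const_mul, hcov j j']
      simp only [heach, mul_ite, mul_one, mul_zero, Finset.sum_ite_eq, Finset.mem_univ, if_true]
      ring
    have hbound : ∑ k, ∑ j, ((a k j + a j k)) ^ 2 ≤ 4 * ∑ i, ∑ j, (a i j) ^ 2 := by
      have h1 : ∑ k, ∑ j, ((a k j + a j k)) ^ 2
          ≤ ∑ k : Fin n, ∑ j : Fin n, (2 * (a k j) ^ 2 + 2 * (a j k) ^ 2) :=
        Finset.sum_le_sum fun k _ => Finset.sum_le_sum fun j _ => by
          nlinarith [sq_nonneg (a k j - a j k)]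
      have hs : ∑ k : Fin n, ∑ j : Fin n, (a j k) ^ 2 = ∑ i : Fin n, ∑ j : Fin n, (a i j) ^ 2 :=
        Finset.sum_comm
      have h2 : (∑ k : Fin n, ∑ j : Fin n, (2 * (a k j) ^ 2 + 2 * (a j k) ^ 2))
          = 4 * ∑ i : Fin n, ∑ j : Fin n, (a i j) ^ 2 := by
        simp only [Finset.sum_add_distrib, ← Finset.mul_sum]
        rw [hs]; ring
      linarith
    have hP := hPoin _ (contDiff_quad a) hint
    rw [hintegral] at hP
    have hcomp : (fun ω => ∑ i, ∑ j, a i j * (X ω i * X ω j))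
        = fun ω => (fun y : EuclideanSpace ℝ (Fin n) => ∑ i, ∑ j, a i j * (y i * y j)) (X ω) := rfl
    rw [hcomp, div_mul_eq_mul_div, le_div_iff₀ hlam, mul_comm]
    linarith
  have hsum : (0:ℝ) ≤ 4 / lam1 := by positivity
  have hmem : (4 / lam1) ∈ corrSet μ X := ⟨hsum, key⟩
  have hbdd : BddBelow (corrSet μ X) := ⟨0, fun L hL => hL.1⟩
  have hub : ∀ L ∈ corrSet μ X, sigma4sq μ X ≤ L := by
    intro L hL
    obtain ⟨hL0, hLa⟩ := hL
    have hd := hLa (fun i j => if i = j then (1:ℝ) else 0)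
    have h1 : (fun ω => ∑ i, ∑ j, (if i = j then (1:ℝ) else 0) * (X ω i * X ω j))
        = fun ω => ‖X ω‖ ^ 2 := by
      funext ω
      rw [hnormsq]
      refine Finset.sum_congr rfl fun i _ => ?_
      simp [ite_mul, Finset.sum_ite_eq, sq]
    have h2 : (∑ i : Fin n, ∑ j : Fin n, (if i = j then (1:ℝ) else 0) ^ 2) = n := by
      simp [ite_pow, Finset.sum_ite_eq]
    simp only [h1, h2] at hd
    rcases Nat.eq_zero_or_pos n with h | h
    · simpa [sigma4sq, h] using hL0
    · have hn : (0:ℝ) < n := by exact_mod_cast h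
      unfold sigma4sq
      calc (1 / (n:ℝ)) * variance (fun ω => ‖X ω‖ ^ 2) μ
          ≤ (1 / (n:ℝ)) * (L * n) := by
            apply mul_le_mul_of_nonneg_left hd (by positivity)
        _ = L := by field_simp
  exact ⟨le_csInf ⟨_, hmem⟩ hub, csInf_le hbdd hmem⟩
end
end
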